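/- arXiv:math/0408285 — 4 statements merged into one kernel-verified Lean document; each statement's English description precedes it below -/
import Mathlib

section
/- Let B : ℝ^n → ℝ^n be a linear map with B ∘ B = id, and let n_B := dim ker(B − id) be the dimension of its fixed subspace. Then for every 0 ≤ p ≤ n, the trace of the induced linear map ⋀^p B on the p-th exterior power of ℝ^n equals K_p^n(n − n_B). -/
open ExteriorAlgebra

/-- The linear map induced on the `p`-th exterior power `⋀^p M` by a linear endomorphism
`f` of `M`. -/
noncomputable def exteriorPowerMap {R M : Type*} [CommRing R] [AddCommGroup M] [Module R M]
    (p : ℕ) (f : M →ₗ[R] M) : ⋀[R]^p M →ₗ[R] ⋀[R]^p M :=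
  (ExteriorAlgebra.map f).toLinearMap.restrict (p := ⋀[R]^p M) (q := ⋀[R]^p M)
    (fun x hx => by
      have h : Submodule.map (ExteriorAlgebra.map f).toLinearMap (⋀[R]^p M) ≤ ⋀[R]^p M := by
        rw [exteriorPower, Submodule.map_pow, ι_range_map_map]
        refine pow_le_pow_left' ?_ p
        rw [← Submodule.map_top (ι R (M := M))]
        exact Submodule.map_mono le_top
      exact h (Submodule.mem_map_of_mem hx))

/-- The value `K_p^n(x)` of the Krawtchouk polynomial of degree `p`:
`K_p^n(x) = ∑_{t=0}^{p} (-1)^t C(x,t) C(n-x, p-t)`. -/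
def krawtchouk (n p x : ℕ) : ℤ :=
  ∑ t ∈ Finset.range (p + 1), (-1) ^ t * (x.choose t) * ((n - x).choose (p - t))

section Aux

variable {M : Type*} [AddCommGroup M] [Module ℝ M] {n p : ℕ}

/-- wedge of basis vectors indexed by a `p`-element subset -/
noncomputable def elemWedge (b : Module.Basis (Fin n) ℝ M) (p : ℕ) (s : Finset (Fin n))
    (hs : s.card = p) : ExteriorAlgebra ℝ M :=
  ιMulti ℝ p (fun i => b (s.orderEmbOfFin hs i))

lemma elemWedge_mem (b : Module.Basis (Fin n) ℝ M) (p : ℕ) (s : Finset (Fin n)) (hs : s.card = p) :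
    elemWedge b p s hs ∈ ⋀[ℝ]^p M :=
  ExteriorAlgebra.ιMulti_range ℝ p (Set.mem_range_self _)

lemma ιMulti_basis_mem_span (b : Module.Basis (Fin n) ℝ M) (p : ℕ) (r : Fin p → Fin n) :
    ιMulti ℝ p (fun i => b (r i)) ∈ Submodule.span ℝ
      (Set.range (fun s : {s : Finset (Fin n) // s.card = p} => elemWedge b p s.1 s.2)) := by
  by_cases hr : Function.Injective r
  · -- image set
    have hs : (Finset.univ.image r).card = p := by
      rw [Finset.card_image_of_injective _ hr, Finset.card_univ, Fintype.card_fin]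
    set s : Finset (Fin n) := Finset.univ.image r with hsdef
    -- bijection from Fin p to s
    have hmem : ∀ i, r i ∈ s := fun i => Finset.mem_image_of_mem r (Finset.mem_univ i)
    let e1 : Fin p ≃ {x // x ∈ s} := Equiv.ofBijective (fun i => ⟨r i, hmem i⟩)
      (by
        rw [Fintype.bijective_iff_injective_and_card]
        constructor
        · intro i j hij
          exact hr (congrArg Subtype.val hij)
        · simp [Fintype.card_coe, hs])
    let σ : Equiv.Perm (Fin p) := e1.trans (s.orderIsoOfFin hs).toEquiv.symm
    have hfac : (fun i => b (r i)) = (fun i => b (s.orderEmbOfFin hs i)) ∘ σ := by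
      funext i
      simp only [Function.comp_apply]
      congr 1
      have : s.orderIsoOfFin hs (σ i) = e1 i := by
        simp [σ]
      have h2 : (s.orderIsoOfFin hs (σ i) : Fin n) = r i := by rw [this]; rfl
      rw [← Finset.coe_orderIsoOfFin_apply s hs (σ i), h2]
    rw [hfac, AlternatingMap.map_perm]
    rcases Int.units_eq_one_or (Equiv.Perm.sign σ) with h | h <;> rw [h]
    · rw [one_smul]
      exact Submodule.subset_span ⟨⟨s, hs⟩, rfl⟩
    · have : ((-1 : ℤˣ) : ℤ) • ιMulti ℝ p (fun i => b (s.orderEmbOfFin hs i))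
          = -(elemWedge b p s hs) := by
        simp [elemWedge]
      rw [Units.smul_def, this]
      exact Submodule.neg_mem _ (Submodule.subset_span ⟨⟨s, hs⟩, rfl⟩)
  · rw [AlternatingMap.map_eq_zero_of_not_injective]
    · exact Submodule.zero_mem _
    · intro h
      exact hr fun i j hij => h (by simp only [hij])

lemma exteriorPower_le_span (b : Module.Basis (Fin n) ℝ M) (p : ℕ) :
    ⋀[ℝ]^p M ≤ Submodule.span ℝ
      (Set.range (fun s : {s : Finset (Fin n) // s.card = p} => elemWedge b p s.1 s.2)) := by
  rw [← ExteriorAlgebra.ιMulti_span_fixedDegree ℝ p, Submodule.span_le]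
  rintro _ ⟨v, rfl⟩
  have hv : ιMulti ℝ p v = (ιMulti ℝ p).toMultilinearMap
      (fun i => ∑ j, b.repr (v i) j • b j) := by
    simp only [AlternatingMap.coe_multilinearMap]
    congr 1
    funext i
    exact (b.sum_repr (v i)).symm
  rw [hv, MultilinearMap.map_sum]
  refine Submodule.sum_mem _ (fun r _ => ?_)
  have h2 : (ιMulti ℝ p).toMultilinearMap (fun i => b.repr (v i) (r i) • b (r i))
      = (∏ i, b.repr (v i) (r i)) • ιMulti ℝ p (fun i => b (r i)) :=
    MultilinearMap.map_smul_univ _ _ _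
  rw [h2]
  exact Submodule.smul_mem _ _ (ιMulti_basis_mem_span b p r)

/-- coordinate functional on the exterior algebra dual to `elemWedge b p s` -/
noncomputable def wedgeCoord (b : Module.Basis (Fin n) ℝ M) (p : ℕ) (s : Finset (Fin n))
    (hs : s.card = p) : ExteriorAlgebra ℝ M →ₗ[ℝ] ℝ :=
  ExteriorAlgebra.liftAlternating (Function.update (fun _ => 0) p
    (((Pi.basisFun ℝ (Fin p)).det).compLinearMap
      (LinearMap.pi (fun i => b.coord (s.orderEmbOfFin hs i)))))

lemma wedgeCoord_elemWedge (b : Module.Basis (Fin n) ℝ M) (p : ℕ) (s t : Finset (Fin n))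
    (hs : s.card = p) (ht : t.card = p) :
    wedgeCoord b p s hs (elemWedge b p t ht) = if s = t then 1 else 0 := by
  rw [wedgeCoord, elemWedge, ExteriorAlgebra.liftAlternating_apply_ιMulti,
    Function.update_self, AlternatingMap.compLinearMap_apply, Module.Basis.det_apply]
  have hA : ∀ i j, (Pi.basisFun ℝ (Fin p)).toMatrix
      (fun j => LinearMap.pi (fun i => b.coord (s.orderEmbOfFin hs i)) (b (t.orderEmbOfFin ht j))) i j
      = if s.orderEmbOfFin hs i = t.orderEmbOfFin ht j then 1 else 0 := by
    intro i j
    simp only [Module.Basis.toMatrix_apply, LinearMap.pi_apply, Module.Basis.coord_apply, Module.Basis.repr_self,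
      Pi.basisFun_repr, Finsupp.single_apply]
    exact if_congr eq_comm rfl rfl
  by_cases h : s = t
  · subst h
    rw [if_pos rfl]
    have : ((Pi.basisFun ℝ (Fin p)).toMatrix
        (fun j => LinearMap.pi (fun i => b.coord (s.orderEmbOfFin hs i)) (b (s.orderEmbOfFin hs j))))
        = 1 := by
      ext i j
      rw [hA i j, Matrix.one_apply]
      simp [(s.orderEmbOfFin hs).injective.eq_iff]
    rw [this, Matrix.det_one]
  · rw [if_neg h]
    have hsub : ¬ s ⊆ t := fun hsub => h (Finset.eq_of_subset_of_card_le hsub (by rw [hs, ht]))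
    obtain ⟨x, hxs, hxt⟩ := Finset.not_subset.mp hsub
    obtain ⟨i0, hi0⟩ : ∃ i0, s.orderEmbOfFin hs i0 = x := by
      have : x ∈ Set.range (s.orderEmbOfFin hs) := by rw [Finset.range_orderEmbOfFin]; exact hxs
      exact this
    apply Matrix.det_eq_zero_of_row_eq_zero i0
    intro j
    rw [hA i0 j, if_neg]
    intro hcon
    exact hxt (by rw [← hi0, hcon]; exact Finset.orderEmbOfFin_mem t ht j)

/-- Module.Basis of the `p`-th exterior power from a basis of `M`. -/
noncomputable def exteriorBasis (b : Module.Basis (Fin n) ℝ M) (p : ℕ) :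
    Module.Basis {s : Finset (Fin n) // s.card = p} ℝ ↥(⋀[ℝ]^p M) := by
  refine Module.Basis.mk (v := fun s => ⟨elemWedge b p s.1 s.2, elemWedge_mem b p s.1 s.2⟩) ?_ ?_
  · rw [linearIndependent_iff']
    intro tset g hsum i hi
    have h0 : wedgeCoord b p i.1 i.2
        ((⋀[ℝ]^p M).subtype (∑ j ∈ tset, g j • (⟨elemWedge b p j.1 j.2,
          elemWedge_mem b p j.1 j.2⟩ : ⋀[ℝ]^p M))) = 0 := by rw [hsum]; simp
    rw [map_sum, map_sum] at h0
    simp only [map_smul, Submodule.coe_subtype, SetLike.mk_smul_mk, wedgeCoord_elemWedge,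
      smul_eq_mul] at h0
    have h1 : ∀ j ∈ tset, (g j * if (i : Finset (Fin n)) = (j : Finset (Fin n)) then 1 else 0)
        = if i = j then g j else 0 := by
      intro j _
      by_cases hji : i = j
      · subst hji; simp
      · rw [if_neg (fun h => hji (Subtype.ext h)), if_neg hji, mul_zero]
    rw [Finset.sum_congr rfl h1] at h0
    rwa [Finset.sum_ite_eq tset i g, if_pos hi] at h0
  · intro x _
    have hx : (x : ExteriorAlgebra ℝ M) ∈ Submodule.map (⋀[ℝ]^p M).subtype
        (Submodule.span ℝ (Set.range fun s : {s : Finset (Fin n) // s.card = p} =>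
          (⟨elemWedge b p s.1 s.2, elemWedge_mem b p s.1 s.2⟩ : ⋀[ℝ]^p M))) := by
      rw [Submodule.map_span]
      have : (⋀[ℝ]^p M).subtype '' (Set.range fun s : {s : Finset (Fin n) // s.card = p} =>
          (⟨elemWedge b p s.1 s.2, elemWedge_mem b p s.1 s.2⟩ : ⋀[ℝ]^p M)) =
          Set.range fun s : {s : Finset (Fin n) // s.card = p} => elemWedge b p s.1 s.2 := by
        rw [← Set.range_comp]; rfl
      rw [this]
      exact exteriorPower_le_span b p x.2
    obtain ⟨y, hy, hxy⟩ := hx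
    have : y = x := Subtype.ext hxy
    rwa [← this]

lemma exteriorBasis_apply (b : Module.Basis (Fin n) ℝ M) (p : ℕ) (s : {s : Finset (Fin n) // s.card = p}) :
    (exteriorBasis b p s : ExteriorAlgebra ℝ M) = elemWedge b p s.1 s.2 := by
  rw [exteriorBasis, Module.Basis.mk_apply]

lemma trace_exteriorPowerMap_eigen (b : Module.Basis (Fin n) ℝ M) (f : M →ₗ[ℝ] M) (ε : Fin n → ℝ)
    (hf : ∀ i, f (b i) = ε i • b i) (p : ℕ) :
    LinearMap.trace ℝ ↥(⋀[ℝ]^p M) (exteriorPowerMap p f) =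
      ∑ s ∈ Finset.powersetCard p (Finset.univ : Finset (Fin n)), ∏ i ∈ s, ε i := by
  classical
  rw [LinearMap.trace_eq_matrix_trace ℝ (exteriorBasis b p), Matrix.trace]
  have key : ∀ s : {s : Finset (Fin n) // s.card = p},
      exteriorPowerMap p f (exteriorBasis b p s) = (∏ i ∈ s.1, ε i) • exteriorBasis b p s := by
    intro s
    apply Subtype.ext
    rw [exteriorPowerMap, LinearMap.restrict_coe_apply, SetLike.val_smul, exteriorBasis_apply,
      elemWedge]
    rw [AlgHom.toLinearMap_apply, ExteriorAlgebra.map_apply_ιMulti]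
    simp only [Function.comp_def]
    simp only [hf]
    rw [show ((ιMulti ℝ p) fun i => ε ((s.1.orderEmbOfFin s.2) i) • b ((s.1.orderEmbOfFin s.2) i))
        = (∏ i, ε ((s.1.orderEmbOfFin s.2) i)) • (ιMulti ℝ p) fun i => b ((s.1.orderEmbOfFin s.2) i)
      from MultilinearMap.map_smul_univ _ _ _]
    congr 1
    have hprod : ∏ i : Fin p, ε (s.1.orderEmbOfFin s.2 i) = ∏ i ∈ s.1, ε i :=
      Finset.prod_bij (fun i _ => s.1.orderEmbOfFin s.2 i)
        (fun i _ => Finset.orderEmbOfFin_mem s.1 s.2 i)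
        (fun i _ j _ h => (s.1.orderEmbOfFin s.2).injective h)
        (fun x hx => by
          have hr : x ∈ Set.range (s.1.orderEmbOfFin s.2) := by
            rw [Finset.range_orderEmbOfFin]; exact hx
          obtain ⟨i, hi⟩ := hr
          exact ⟨i, Finset.mem_univ i, hi⟩)
        (fun i _ => rfl)
    exact hprod
  have diag : ∀ s : {s : Finset (Fin n) // s.card = p},
      LinearMap.toMatrix (exteriorBasis b p) (exteriorBasis b p) (exteriorPowerMap p f) s s
      = ∏ i ∈ s.1, ε i := by
    intro s
    rw [LinearMap.toMatrix_apply, key, map_smul, Module.Basis.repr_self]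
    simp
  simp only [Matrix.diag]
  rw [Finset.sum_congr rfl (fun s _ => diag s)]
  exact (Finset.sum_subtype _ (fun s => Finset.mem_powersetCard_univ) (fun s => ∏ i ∈ s, ε i)).symm

lemma sum_powersetCard_prod_sign {n : ℕ} (A Bc : Finset (Fin n)) (hd : Disjoint A Bc)
    (hu : A ∪ Bc = Finset.univ) (p : ℕ) (ε : Fin n → ℝ) (hA : ∀ i ∈ A, ε i = -1)
    (hB : ∀ i ∈ Bc, ε i = 1) :
    ∑ s ∈ Finset.powersetCard p (Finset.univ : Finset (Fin n)), ∏ i ∈ s, ε i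
      = ∑ t ∈ Finset.range (p + 1),
          (-1 : ℝ) ^ t * (A.card.choose t) * (Bc.card.choose (p - t)) := by
  classical
  have step1 : ∀ s : Finset (Fin n), ∏ i ∈ s, ε i = (-1 : ℝ) ^ (s ∩ A).card := by
    intro s
    have hsplit : s = (s ∩ A) ∪ (s ∩ Bc) := by
      rw [← Finset.inter_union_distrib_left, hu, Finset.inter_univ]
    have hdisj : Disjoint (s ∩ A) (s ∩ Bc) :=
      hd.mono Finset.inter_subset_right Finset.inter_subset_right
    rw [hsplit, Finset.prod_union hdisj]
    have e1 : ∏ i ∈ s ∩ A, ε i = (-1 : ℝ) ^ (s ∩ A).card := by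
      rw [Finset.prod_congr rfl (fun i hi => hA i (Finset.mem_of_mem_inter_right hi)),
        Finset.prod_const]
    have e2 : ∏ i ∈ s ∩ Bc, ε i = 1 := by
      rw [Finset.prod_congr rfl (fun i hi => hB i (Finset.mem_of_mem_inter_right hi)),
        Finset.prod_const, one_pow]
    rw [e1, e2, mul_one]
    congr 1
    rw [← hsplit]
  have step2 : ∑ s ∈ Finset.powersetCard p (Finset.univ : Finset (Fin n)), ∏ i ∈ s, ε i
      = ∑ x ∈ (Finset.range (p + 1)).sigma
          (fun t => (Finset.powersetCard t A) ×ˢ (Finset.powersetCard (p - t) Bc)),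
          (-1 : ℝ) ^ x.1 := by
    refine Finset.sum_nbij' (i := fun s => ⟨(s ∩ A).card, (s ∩ A, s ∩ Bc)⟩)
      (j := fun x => x.2.1 ∪ x.2.2) ?_ ?_ ?_ ?_ ?_
    · intro s hs
      rw [Finset.mem_powersetCard] at hs
      have hcards : (s ∩ A).card + (s ∩ Bc).card = p := by
        rw [← Finset.card_union_of_disjoint
          (hd.mono Finset.inter_subset_right Finset.inter_subset_right),
          ← Finset.inter_union_distrib_left, hu, Finset.inter_univ, hs.2]
      simp only [Finset.mem_sigma, Finset.mem_range, Finset.mem_product, Finset.mem_powersetCard]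
      refine ⟨by omega, ⟨Finset.inter_subset_right, trivial⟩, ⟨Finset.inter_subset_right, by omega⟩⟩
    · rintro ⟨t, u, v⟩ hx
      simp only [Finset.mem_sigma, Finset.mem_range, Finset.mem_product,
        Finset.mem_powersetCard] at hx
      rw [Finset.mem_powersetCard]
      refine ⟨Finset.subset_univ _, ?_⟩
      rw [Finset.card_union_of_disjoint (hd.mono hx.2.1.1 hx.2.2.1), hx.2.1.2, hx.2.2.2]
      omega
    · intro s hs
      simp only
      rw [← Finset.inter_union_distrib_left, hu, Finset.inter_univ]
    · rintro ⟨t, u, v⟩ hx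
      simp only [Finset.mem_sigma, Finset.mem_range, Finset.mem_product,
        Finset.mem_powersetCard] at hx
      have h1 : (u ∪ v) ∩ A = u := by
        rw [Finset.union_inter_distrib_right, Finset.inter_eq_left.mpr hx.2.1.1,
          Finset.disjoint_iff_inter_eq_empty.mp (hd.symm.mono_left hx.2.2.1),
          Finset.union_empty]
      have h2 : (u ∪ v) ∩ Bc = v := by
        rw [Finset.union_inter_distrib_right,
          Finset.disjoint_iff_inter_eq_empty.mp (hd.mono_left hx.2.1.1),
          Finset.empty_union, Finset.inter_eq_left.mpr hx.2.2.1]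
      simp only
      rw [h1, h2, hx.2.1.2]
    · intro s hs
      exact step1 s
  rw [step2, Finset.sum_sigma]
  refine Finset.sum_congr rfl (fun t ht => ?_)
  simp only [Finset.sum_const, Finset.card_product, Finset.card_powersetCard, nsmul_eq_mul]
  push_cast
  ring

end Aux

/-- If `B : ℝ^n → ℝ^n` is linear with `B ∘ B = id` and `n_B = dim ker (B - id)`, then for
`0 ≤ p ≤ n` the trace of `⋀^p B` equals `K_p^n(n - n_B)`. -/
theorem trace_exteriorPowerMap_of_involutive (n : ℕ)
    (B : (Fin n → ℝ) →ₗ[ℝ] (Fin n → ℝ)) (hB : B ∘ₗ B = LinearMap.id)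
    (p : ℕ) (hp : p ≤ n) :
    LinearMap.trace ℝ (⋀[ℝ]^p (Fin n → ℝ)) (exteriorPowerMap p B) =
      (krawtchouk n p (n - Module.finrank ℝ (LinearMap.ker (B - LinearMap.id))) : ℝ) := by
  classical
  have hBB : ∀ x, B (B x) = x := fun x => by simpa using LinearMap.ext_iff.mp hB x
  set K := LinearMap.ker (B - LinearMap.id) with hK
  set Km := LinearMap.ker (B + LinearMap.id) with hKm
  have hmemK : ∀ x, x ∈ K ↔ B x = x := by
    intro x
    rw [hK, LinearMap.mem_ker, LinearMap.sub_apply, LinearMap.id_apply, sub_eq_zero]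
  have hmemKm : ∀ x, x ∈ Km ↔ B x = -x := by
    intro x
    rw [hKm, LinearMap.mem_ker, LinearMap.add_apply, LinearMap.id_apply, add_eq_zero_iff_eq_neg]
  have hcompl : IsCompl K Km := by
    constructor
    · rw [Submodule.disjoint_def]
      intro x hx1 hx2
      have h1 : B x = x := (hmemK x).mp hx1
      have h2 : B x = -x := (hmemKm x).mp hx2
      have hxx : x = -x := h1.symm.trans h2
      have h3 : (2 : ℝ) • x = 0 := by
        rw [two_smul]
        nth_rewrite 2 [hxx]
        exact add_neg_cancel x
      simpa using (smul_eq_zero.mp h3).resolve_left (by norm_num)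
    · rw [codisjoint_iff, eq_top_iff]
      intro x _
      have hx : x = ((1:ℝ)/2) • (x + B x) + ((1:ℝ)/2) • (x - B x) := by
        rw [smul_add, smul_sub]
        rw [show ((1:ℝ)/2) • x + ((1:ℝ)/2) • B x + (((1:ℝ)/2) • x - ((1:ℝ)/2) • B x)
          = (((1:ℝ)/2) • x + ((1:ℝ)/2) • x) from by abel, ← add_smul]
        norm_num
      rw [hx]
      apply Submodule.add_mem_sup
      · apply Submodule.smul_mem
        rw [hmemK]
        rw [map_add, hBB]
        abel
      · apply Submodule.smul_mem
        rw [hmemKm]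
        rw [map_sub, hBB]
        abel
  set k := Module.finrank ℝ K with hk
  set m := Module.finrank ℝ Km with hm
  have hkm : k + m = n := by
    rw [hk, hm, Submodule.finrank_add_eq_of_isCompl hcompl, Module.finrank_fin_fun]
  let bK := Module.finBasis ℝ K
  let bKm := Module.finBasis ℝ Km
  let b0 : Module.Basis (Fin k ⊕ Fin m) ℝ (Fin n → ℝ) :=
    (bK.prod bKm).map (Submodule.prodEquivOfIsCompl K Km hcompl)
  let e : (Fin k ⊕ Fin m) ≃ Fin n := finSumFinEquiv.trans (finCongr hkm)
  let b : Module.Basis (Fin n) ℝ (Fin n → ℝ) := b0.reindex e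
  let ε : Fin n → ℝ := fun i => Sum.elim (fun _ => (1:ℝ)) (fun _ => (-1:ℝ)) (e.symm i)
  have hb0 : ∀ j, B (b0 j) = Sum.elim (fun _ => (1:ℝ)) (fun _ => (-1:ℝ)) j • b0 j := by
    rintro (j | j)
    · have hval : b0 (Sum.inl j) = (bK j : Fin n → ℝ) := by
        simp [b0, Module.Basis.map_apply]
      rw [hval, Sum.elim_inl, one_smul]
      exact (hmemK _).mp (bK j).2
    · have hval : b0 (Sum.inr j) = (bKm j : Fin n → ℝ) := by
        simp [b0, Module.Basis.map_apply]
      rw [hval, Sum.elim_inr, neg_one_smul]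
      rw [← neg_one_smul ℝ ((bKm j : Fin n → ℝ))] at *
      have := (hmemKm _).mp (bKm j).2
      rw [this]
      simp
  have hf : ∀ i, B (b i) = ε i • b i := by
    intro i
    rw [Module.Basis.reindex_apply]
    have := hb0 (e.symm i)
    simpa [ε] using this
  rw [trace_exteriorPowerMap_eigen b B ε hf p]
  -- combinatorics
  set A : Finset (Fin n) := Finset.univ.image (fun j => e (Sum.inr j)) with hA
  set Bc : Finset (Fin n) := Finset.univ.image (fun j => e (Sum.inl j)) with hBc
  have hdisj : Disjoint A Bc := by
    rw [Finset.disjoint_left]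
    rintro x hx1 hx2
    obtain ⟨j1, _, h1⟩ := Finset.mem_image.mp hx1
    obtain ⟨j2, _, h2⟩ := Finset.mem_image.mp hx2
    exact Sum.inr_ne_inl (e.injective (h1.trans h2.symm))
  have huniv : A ∪ Bc = Finset.univ := by
    apply Finset.eq_univ_of_forall
    intro i
    rcases h : e.symm i with j | j
    · apply Finset.mem_union_right
      exact Finset.mem_image.mpr ⟨j, Finset.mem_univ j, by rw [← h, Equiv.apply_symm_apply]⟩
    · apply Finset.mem_union_left
      exact Finset.mem_image.mpr ⟨j, Finset.mem_univ j, by rw [← h, Equiv.apply_symm_apply]⟩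
  have hεA : ∀ i ∈ A, ε i = -1 := by
    intro i hi
    obtain ⟨j, _, hj⟩ := Finset.mem_image.mp hi
    simp only [ε, ← hj, Equiv.symm_apply_apply, Sum.elim_inr]
  have hεB : ∀ i ∈ Bc, ε i = 1 := by
    intro i hi
    obtain ⟨j, _, hj⟩ := Finset.mem_image.mp hi
    simp only [ε, ← hj, Equiv.symm_apply_apply, Sum.elim_inl]
  have hcardA : A.card = m := by
    rw [hA, Finset.card_image_of_injective _ (fun a c h => Sum.inr_injective (e.injective h)),
      Finset.card_univ, Fintype.card_fin]
  have hcardB : Bc.card = k := by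
    rw [hBc, Finset.card_image_of_injective _ (fun a c h => Sum.inl_injective (e.injective h)),
      Finset.card_univ, Fintype.card_fin]
  rw [sum_powersetCard_prod_sign A Bc hdisj huniv p ε hεA hεB, hcardA, hcardB]
  have hnk : n - k = m := by omega
  have hnm : n - (n - k) = k := by omega
  rw [krawtchouk, hnm, hnk]
  push_cast
  rfl
end

section
/- The group Γ_{j,h} is torsion-free, i.e., every element of Γ_{j,h} other than the identity has infinite order. -/
/-- The block-diagonal matrix `B_{j,h} = diag(J,…,J,−1,…,−1,1,…,1)` (with `j` blocks
`J = [[0,1],[1,0]]`, then `h` entries `−1`, then `l` entries `1`) acting on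
`ℝ^n`, `n = 2j + h + l`. -/
def Bmat (j h l : ℕ) : Matrix (Fin (2 * j + h + l)) (Fin (2 * j + h + l)) ℝ :=
  fun i k =>
    if (i : ℕ) < 2 * j then
      (if (k : ℕ) = 2 * ((i : ℕ) / 2) + (1 - (i : ℕ) % 2) then 1 else 0)
    else if (i : ℕ) < 2 * j + h then (if k = i then -1 else 0)
    else (if k = i then 1 else 0)

/-- The vector `e_n / 2` in `ℝ^n`, `n = 2j + h + l`. -/
noncomputable def bvec (j h l : ℕ) : Fin (2 * j + h + l) → ℝ :=
  fun i => if (i : ℕ) = 2 * j + h + l - 1 then 1 / 2 else 0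

/-- The generating set of `Γ_{j,h}` inside the group of affine isometries of `ℝ^n`:
the affine map `x ↦ B_{j,h} x + e_n/2` together with all translations by vectors of `ℤ^n`. -/
def gammaSet (j h l : ℕ) :
    Set (EuclideanSpace ℝ (Fin (2 * j + h + l)) ≃ᵃⁱ[ℝ] EuclideanSpace ℝ (Fin (2 * j + h + l))) :=
  {γ | (∀ x, γ x = (Bmat j h l).mulVec x + bvec j h l) ∨
       (∃ lam : Fin (2 * j + h + l) → ℤ, ∀ x, γ x = fun m => x m + (lam m : ℝ))}

/-- The Bieberbach group `Γ_{j,h}`, as the subgroup of the group of affine isometries of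
`ℝ^n` generated by `x ↦ B_{j,h} x + e_n/2` and the translations by `ℤ^n`. -/
noncomputable def GammaJH (j h l : ℕ) :
    Subgroup (EuclideanSpace ℝ (Fin (2 * j + h + l)) ≃ᵃⁱ[ℝ] EuclideanSpace ℝ (Fin (2 * j + h + l))) :=
  Subgroup.closure (gammaSet j h l)

lemma Bmat_mulVec (j h l : ℕ) (x : Fin (2 * j + h + l) → ℝ) (i : Fin (2 * j + h + l)) :
    (Bmat j h l).mulVec x i =
      if hi : (i : ℕ) < 2 * j then
        x ⟨2 * ((i : ℕ) / 2) + (1 - (i : ℕ) % 2), by omega⟩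
      else if (i : ℕ) < 2 * j + h then -x i else x i := by
  by_cases h1 : (i : ℕ) < 2 * j
  · rw [dif_pos h1]
    have ht : 2 * ((i : ℕ) / 2) + (1 - (i : ℕ) % 2) < 2 * j + h + l := by omega
    rw [Matrix.mulVec, dotProduct]
    rw [Finset.sum_eq_single (⟨2 * ((i : ℕ) / 2) + (1 - (i : ℕ) % 2), ht⟩ : Fin _)]
    · simp [Bmat, h1]
    · intro b _ hb
      have : (b : ℕ) ≠ 2 * ((i : ℕ) / 2) + (1 - (i : ℕ) % 2) := fun e => hb (Fin.ext e)
      simp [Bmat, h1, this]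
    · simp
  · rw [dif_neg h1, Matrix.mulVec, dotProduct]
    by_cases h2 : (i : ℕ) < 2 * j + h
    · rw [if_pos h2, Finset.sum_eq_single i]
      · simp [Bmat, h1, h2]
      · intro b _ hb; simp [Bmat, h1, h2, hb]
      · simp
    · rw [if_neg h2, Finset.sum_eq_single i]
      · simp [Bmat, h1, h2]
      · intro b _ hb; simp [Bmat, h1, h2, hb]
      · simp

lemma Bmat_invol (j h l : ℕ) (x : Fin (2 * j + h + l) → ℝ) :
    (Bmat j h l).mulVec ((Bmat j h l).mulVec x) = x := by
  funext i
  rw [Bmat_mulVec]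
  by_cases h1 : (i : ℕ) < 2 * j
  · rw [dif_pos h1, Bmat_mulVec]
    have h1' : 2 * ((i : ℕ) / 2) + (1 - (i : ℕ) % 2) < 2 * j := by omega
    rw [dif_pos h1']
    congr 1
    apply Fin.ext
    show 2 * ((2 * ((i:ℕ)/2) + (1 - (i:ℕ)%2)) / 2) + (1 - (2 * ((i:ℕ)/2) + (1 - (i:ℕ)%2)) % 2) = (i:ℕ)
    omega
  · rw [dif_neg h1]
    by_cases h2 : (i : ℕ) < 2 * j + h
    · rw [if_pos h2, Bmat_mulVec, dif_neg h1, if_pos h2, neg_neg]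
    · rw [if_neg h2, Bmat_mulVec, dif_neg h1, if_neg h2]

lemma Bmat_mulVec_last (j h l : ℕ) (hl : 1 ≤ l) (x : Fin (2 * j + h + l) → ℝ) :
    (Bmat j h l).mulVec x ⟨2 * j + h + l - 1, by omega⟩ = x ⟨2 * j + h + l - 1, by omega⟩ := by
  rw [Bmat_mulVec]
  have h1 : ¬ ((2 * j + h + l - 1 : ℕ) < 2 * j) := by omega
  have h2 : ¬ ((2 * j + h + l - 1 : ℕ) < 2 * j + h) := by omega
  rw [dif_neg h1, if_neg h2]


/-- The key structural invariant of elements of `Γ`. -/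
def Pp (j h l : ℕ) (hl : 1 ≤ l)
    (γ : EuclideanSpace ℝ (Fin (2 * j + h + l)) ≃ᵃⁱ[ℝ] EuclideanSpace ℝ (Fin (2 * j + h + l))) :
    Prop :=
  ∃ (ε : Bool) (v : Fin (2 * j + h + l) → ℝ) (m : ℤ),
    (∀ x (i : Fin (2 * j + h + l)),
        γ x i = (if ε then (Bmat j h l).mulVec x i else x i) + v i) ∧
    v ⟨2 * j + h + l - 1, by omega⟩ = (if ε then (1 : ℝ) / 2 else 0) + m

lemma mulVec_split {n : ℕ} (A : Matrix (Fin n) (Fin n) ℝ) (y z v : Fin n → ℝ)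
    (hy : ∀ i, y i = z i + v i) : ∀ i, A.mulVec y i = A.mulVec z i + A.mulVec v i := by
  have : y = z + v := funext hy
  rw [this, Matrix.mulVec_add]
  intro i; rfl

lemma Pp_of_mem (j h l : ℕ) (hl : 1 ≤ l)
    (γ : EuclideanSpace ℝ (Fin (2 * j + h + l)) ≃ᵃⁱ[ℝ] EuclideanSpace ℝ (Fin (2 * j + h + l)))
    (hγ : γ ∈ GammaJH j h l) : Pp j h l hl γ := by
  induction hγ using Subgroup.closure_induction with
  | mem γ hγ =>
    rcases hγ with hB | ⟨lam, hlam⟩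
    · refine ⟨true, bvec j h l, 0, ?_, ?_⟩
      · intro x i
        have := congrFun (hB x) i
        simpa using this
      · simp [bvec]
    · refine ⟨false, fun i => (lam i : ℝ), lam ⟨2 * j + h + l - 1, by omega⟩, ?_, ?_⟩
      · intro x i
        have := congrFun (hlam x) i
        simpa using this
      · simp
  | one =>
    exact ⟨false, 0, 0, by simp, by simp⟩
  | mul γ₁ γ₂ _ _ P1 P2 =>
    obtain ⟨ε₁, v₁, m₁, h1, hm1⟩ := P1
    obtain ⟨ε₂, v₂, m₂, h2, hm2⟩ := P2
    have key : ∀ x (i : Fin (2 * j + h + l)),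
        (γ₁ * γ₂) x i = (if ε₁ then (Bmat j h l).mulVec (γ₂ x) i else γ₂ x i) + v₁ i := by
      intro x i
      rw [AffineIsometryEquiv.coe_mul, Function.comp_apply]
      exact h1 (γ₂ x) i
    cases ε₁ with
    | false =>
      refine ⟨ε₂, fun i => v₂ i + v₁ i, m₂ + m₁, ?_, ?_⟩
      · intro x i
        rw [key x i, if_neg Bool.false_ne_true, h2 x i]
        ring
      · show v₂ _ + v₁ _ = _
        rw [hm1, hm2]
        cases ε₂ <;> simp only [if_pos rfl, if_neg Bool.false_ne_true] <;> push_cast <;> ring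
    | true =>
      cases ε₂ with
      | false =>
        refine ⟨true, fun i => (Bmat j h l).mulVec v₂ i + v₁ i, m₂ + m₁, ?_, ?_⟩
        · intro x i
          rw [key x i]
          rw [mulVec_split (Bmat j h l) (γ₂ x) x v₂
              (fun i' => by rw [h2 x i', if_neg Bool.false_ne_true]) i]
          rw [if_pos rfl, if_pos rfl]
          ring
        · show (Bmat j h l).mulVec v₂ _ + v₁ _ = _
          rw [Bmat_mulVec_last j h l hl, hm1, hm2]
          simp only [Bool.false_eq_true, if_false, if_true]; push_cast; ring
      | true =>
        refine ⟨false, fun i => (Bmat j h l).mulVec v₂ i + v₁ i, m₂ + m₁ + 1, ?_, ?_⟩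
        · intro x i
          rw [key x i]
          rw [mulVec_split (Bmat j h l) (γ₂ x) ((Bmat j h l).mulVec x) v₂
              (fun i' => by rw [h2 x i', if_pos rfl]) i]
          rw [show (Bmat j h l).mulVec ((Bmat j h l).mulVec x) = x from Bmat_invol j h l x]
          rw [if_pos rfl, if_neg Bool.false_ne_true]
          ring
        · show (Bmat j h l).mulVec v₂ _ + v₁ _ = _
          rw [Bmat_mulVec_last j h l hl, hm1, hm2]
          simp only [Bool.false_eq_true, if_false, if_true]; push_cast; ring
  | inv γ _ P1 =>
    obtain ⟨ε, v, m, h1, hm⟩ := P1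
    have hcoe : (⇑(γ⁻¹) : _ → _) = ⇑γ.symm := rfl
    cases ε with
    | false =>
      refine ⟨false, fun i => -v i, -m, ?_, ?_⟩
      · intro y i
        rw [hcoe]
        have hy := h1 (γ.symm y) i
        rw [γ.apply_symm_apply y] at hy
        rw [if_neg Bool.false_ne_true] at hy
        rw [if_neg Bool.false_ne_true]
        show γ.symm y i = y i + (-(v i))
        linarith
      · show -v _ = _
        rw [hm]; simp only [Bool.false_eq_true, if_false, if_true]; push_cast; ring
    | true =>
      refine ⟨true, fun i => -((Bmat j h l).mulVec v i), -m - 1, ?_, ?_⟩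
      · intro y i
        rw [hcoe]
        have hy : ∀ i', y i' = (Bmat j h l).mulVec (γ.symm y) i' + v i' := by
          intro i'
          have := h1 (γ.symm y) i'
          rw [γ.apply_symm_apply y, if_pos rfl] at this
          exact this
        have h2 : (Bmat j h l).mulVec y i
            = γ.symm y i + (Bmat j h l).mulVec v i := by
          have := mulVec_split (Bmat j h l) y ((Bmat j h l).mulVec (γ.symm y)) v hy i
          rw [show (Bmat j h l).mulVec ((Bmat j h l).mulVec (γ.symm y)) = γ.symm y from
            Bmat_invol j h l _] at this
          exact this
        rw [if_pos rfl]
        show γ.symm y i = (Bmat j h l).mulVec y i + (-((Bmat j h l).mulVec v i))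
        linarith
      · show -((Bmat j h l).mulVec v _) = _
        rw [Bmat_mulVec_last j h l hl, hm]; simp only [Bool.false_eq_true, if_false, if_true]; push_cast; ring

lemma pow_translation {j h l : ℕ}
    (γ : EuclideanSpace ℝ (Fin (2 * j + h + l)) ≃ᵃⁱ[ℝ] EuclideanSpace ℝ (Fin (2 * j + h + l)))
    (v : Fin (2 * j + h + l) → ℝ) (hγ : ∀ x i, γ x i = x i + v i) :
    ∀ (k : ℕ) x (i : Fin (2 * j + h + l)), (γ ^ k) x i = x i + k * v i := by
  intro k
  induction k with
  | zero =>
    intro x i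
    rw [pow_zero]
    simp [AffineIsometryEquiv.coe_one]
  | succ k ih =>
    intro x i
    rw [pow_succ, AffineIsometryEquiv.coe_mul, Function.comp_apply, ih (γ x) i, hγ x i]
    push_cast
    ring

lemma not_finOrder_translation {j h l : ℕ}
    (γ : EuclideanSpace ℝ (Fin (2 * j + h + l)) ≃ᵃⁱ[ℝ] EuclideanSpace ℝ (Fin (2 * j + h + l)))
    (v : Fin (2 * j + h + l) → ℝ) (hγ : ∀ x i, γ x i = x i + v i)
    (i0 : Fin (2 * j + h + l)) (hv : v i0 ≠ 0) : ¬IsOfFinOrder γ := by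
  intro hf
  obtain ⟨k, hk, hpow⟩ := isOfFinOrder_iff_pow_eq_one.mp hf
  have h1 := pow_translation γ v hγ k 0 i0
  rw [hpow] at h1
  simp [AffineIsometryEquiv.coe_one] at h1
  rcases h1 with h1 | h1
  · omega
  · exact hv h1

/-- `Γ_{j,h}` is torsion-free: every element other than the identity has infinite order. -/
theorem gammaJH_torsionFree (j h l : ℕ) (hl : 1 ≤ l) (hjh : j + h ≠ 0) :
    ∀ γ : GammaJH j h l, γ ≠ 1 → ¬IsOfFinOrder γ := by
  intro γ hne hf
  have hfg : IsOfFinOrder (γ : EuclideanSpace ℝ (Fin (2 * j + h + l)) ≃ᵃⁱ[ℝ]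
      EuclideanSpace ℝ (Fin (2 * j + h + l))) :=
    ((GammaJH j h l).subtype).isOfFinOrder hf
  have hg1 : (γ : EuclideanSpace ℝ (Fin (2 * j + h + l)) ≃ᵃⁱ[ℝ]
      EuclideanSpace ℝ (Fin (2 * j + h + l))) ≠ 1 := fun e => hne (Subtype.ext e)
  obtain ⟨ε, v, m, h1, hm⟩ := Pp_of_mem j h l hl _ γ.2
  cases ε with
  | false =>
    rw [if_neg Bool.false_ne_true] at hm
    have hγ' : ∀ x (i : Fin (2 * j + h + l)), (γ : EuclideanSpace ℝ (Fin (2 * j + h + l)) ≃ᵃⁱ[ℝ]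
        EuclideanSpace ℝ (Fin (2 * j + h + l))) x i = x i + v i := by
      intro x i
      have := h1 x i
      rwa [if_neg Bool.false_ne_true] at this
    have hex : ∃ i, v i ≠ 0 := by
      by_contra hc
      push_neg at hc
      apply hg1
      apply AffineIsometryEquiv.ext
      intro x
      have : ((1 : EuclideanSpace ℝ (Fin (2 * j + h + l)) ≃ᵃⁱ[ℝ]
          EuclideanSpace ℝ (Fin (2 * j + h + l))) x) = x := by
        simp [AffineIsometryEquiv.coe_one]
      rw [this]
      ext i
      rw [hγ' x i, hc i, add_zero]
    obtain ⟨i0, hi0⟩ := hex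
    exact not_finOrder_translation _ v hγ' i0 hi0 hfg
  | true =>
    rw [if_pos rfl] at hm
    have hγ' : ∀ x (i : Fin (2 * j + h + l)),
        (γ : EuclideanSpace ℝ (Fin (2 * j + h + l)) ≃ᵃⁱ[ℝ]
        EuclideanSpace ℝ (Fin (2 * j + h + l))) x i = (Bmat j h l).mulVec x i + v i := by
      intro x i
      have := h1 x i
      rwa [if_pos rfl] at this
    set g := (γ : EuclideanSpace ℝ (Fin (2 * j + h + l)) ≃ᵃⁱ[ℝ]
      EuclideanSpace ℝ (Fin (2 * j + h + l))) with hgdef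
    have h2 : ∀ x (i : Fin (2 * j + h + l)),
        (g * g) x i = x i + ((Bmat j h l).mulVec v i + v i) := by
      intro x i
      rw [AffineIsometryEquiv.coe_mul, Function.comp_apply, hγ' (g x) i]
      rw [mulVec_split (Bmat j h l) (g x) ((Bmat j h l).mulVec x) v (fun i' => hγ' x i') i]
      rw [show (Bmat j h l).mulVec ((Bmat j h l).mulVec x) = x from Bmat_invol j h l x]
      ring
    have hf2 : IsOfFinOrder (g * g) := by
      have := hfg.pow (n := 2)
      rwa [pow_two] at this
    have hlast : (Bmat j h l).mulVec v ⟨2 * j + h + l - 1, by omega⟩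
        + v ⟨2 * j + h + l - 1, by omega⟩ ≠ 0 := by
      rw [Bmat_mulVec_last j h l hl, hm]
      have : (1 : ℝ) + 2 * m ≠ 0 := by
        have : (1 + 2 * m : ℤ) ≠ 0 := by omega
        have h' : ((1 + 2 * m : ℤ) : ℝ) ≠ 0 := Int.cast_ne_zero.mpr this
        push_cast at h'
        exact h'
      intro hc
      apply this
      linarith
    exact not_finOrder_translation (g * g) _ h2 ⟨2 * j + h + l - 1, by omega⟩ hlast hf2
end

section
/- The abelianization of the group Γ_{j,h} is isomorphic to ℤ^{j+l} × (ℤ/2ℤ)^h. -/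
namespace GammaAux

variable (j h l : ℕ)

abbrev E := EuclideanSpace ℝ (Fin (2 * j + h + l))

lemma add_app (x y : E j h l) (m : Fin (2 * j + h + l)) : (x + y) m = x m + y m := rfl
lemma neg_app (x : E j h l) (m : Fin (2 * j + h + l)) : (-x) m = -(x m) := rfl
lemma sub_app (x y : E j h l) (m : Fin (2 * j + h + l)) : (x - y) m = x m - y m := rfl
lemma zero_app (m : Fin (2 * j + h + l)) : (0 : E j h l) m = 0 := rfl
lemma smul_app (c : ℝ) (x : E j h l) (m : Fin (2 * j + h + l)) : (c • x) m = c * x m := rfl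

def sig (i : Fin (2 * j + h + l)) : Fin (2 * j + h + l) :=
  if hi : (i : ℕ) < 2 * j then
    ⟨2 * ((i : ℕ) / 2) + (1 - (i : ℕ) % 2), by omega⟩
  else i

lemma sig_val (i : Fin (2 * j + h + l)) (hi : (i : ℕ) < 2 * j) :
    (sig j h l i : ℕ) = 2 * ((i : ℕ) / 2) + (1 - (i : ℕ) % 2) := by
  simp [sig, hi]

lemma sig_val_lt (i : Fin (2 * j + h + l)) (hi : (i : ℕ) < 2 * j) :
    (sig j h l i : ℕ) < 2 * j := by
  rw [sig_val j h l i hi]; omega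

lemma sig_val_ge (i : Fin (2 * j + h + l)) (hi : ¬ (i : ℕ) < 2 * j) :
    sig j h l i = i := by
  simp [sig, hi]

lemma sig_sig (i : Fin (2 * j + h + l)) : sig j h l (sig j h l i) = i := by
  by_cases hi : (i : ℕ) < 2 * j
  · apply Fin.ext
    rw [sig_val j h l _ (sig_val_lt j h l i hi), sig_val j h l i hi]
    omega
  · rw [sig_val_ge j h l i hi, sig_val_ge j h l i hi]

def Bapp (v : E j h l) : E j h l := WithLp.toLp 2 (fun i =>
  if (i : ℕ) < 2 * j then v (sig j h l i)
  else if (i : ℕ) < 2 * j + h then -(v i) else v i)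

def Bint (v : Fin (2 * j + h + l) → ℤ) : Fin (2 * j + h + l) → ℤ := fun i =>
  if (i : ℕ) < 2 * j then v (sig j h l i)
  else if (i : ℕ) < 2 * j + h then -(v i) else v i

lemma mulVec_eq (v : E j h l) (i : Fin (2 * j + h + l)) :
    (Bmat j h l).mulVec v i = Bapp j h l v i := by
  simp only [Matrix.mulVec, dotProduct, Bmat, Bapp]
  by_cases h1 : (i : ℕ) < 2 * j
  · simp only [if_pos h1]
    have hcond : ∀ k : Fin (2 * j + h + l),
        ((k : ℕ) = 2 * ((i : ℕ) / 2) + (1 - (i : ℕ) % 2)) ↔ k = sig j h l i := by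
      intro k
      rw [Fin.ext_iff, sig_val j h l i h1]
    simp only [hcond]
    rw [Finset.sum_eq_single (sig j h l i)]
    · simp
    · intro b _ hb; simp [hb]
    · simp
  · by_cases h2 : (i : ℕ) < 2 * j + h
    · simp only [if_neg h1, if_pos h2]
      rw [Finset.sum_eq_single i]
      · simp
      · intro b _ hb; simp [hb]
      · simp
    · simp only [if_neg h1, if_neg h2]
      rw [Finset.sum_eq_single i]
      · simp
      · intro b _ hb; simp [hb]
      · simp

lemma Bapp_Bapp (v : E j h l) : Bapp j h l (Bapp j h l v) = v := by
  ext i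
  simp only [Bapp]
  by_cases h1 : (i : ℕ) < 2 * j
  · simp only [if_pos h1, if_pos (sig_val_lt j h l i h1)]
    rw [sig_sig]
  · by_cases h2 : (i : ℕ) < 2 * j + h <;> simp [h1, h2]

lemma Bapp_add (v w : E j h l) :
    Bapp j h l (v + w) = Bapp j h l v + Bapp j h l w := by
  ext i; simp only [Bapp, add_app]; split_ifs <;> ring

lemma Bapp_smul (c : ℝ) (v : E j h l) :
    Bapp j h l (c • v) = c • Bapp j h l v := by
  ext i; simp only [Bapp, smul_app]; split_ifs <;> ring

lemma Bapp_zero : Bapp j h l 0 = 0 := by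
  ext i; simp only [Bapp, zero_app]; split_ifs <;> simp

def BlinMap : (E j h l) →ₗ[ℝ] (E j h l) where
  toFun := Bapp j h l
  map_add' := Bapp_add j h l
  map_smul' := Bapp_smul j h l

lemma Bapp_norm (v : E j h l) : ‖BlinMap j h l v‖ = ‖v‖ := by
  rw [EuclideanSpace.norm_eq, EuclideanSpace.norm_eq]
  congr 1
  have key : ∀ i : Fin (2 * j + h + l),
      ‖BlinMap j h l v i‖ ^ 2 = ‖v (sig j h l i)‖ ^ 2 := by
    intro i
    show ‖Bapp j h l v i‖ ^ 2 = _
    simp only [Bapp]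
    split_ifs with h1 h2
    · rfl
    · rw [norm_neg, sig_val_ge j h l i h1]
    · rw [sig_val_ge j h l i h1]
  simp only [key]
  exact Equiv.sum_comp (Function.Involutive.toPerm _ (sig_sig j h l)) (fun i => ‖v i‖ ^ 2)

noncomputable def Bli : (E j h l) ≃ₗᵢ[ℝ] (E j h l) where
  toLinearEquiv := LinearEquiv.ofInvolutive (BlinMap j h l) (Bapp_Bapp j h l)
  norm_map' := Bapp_norm j h l

lemma Bli_apply (v : E j h l) : Bli j h l v = Bapp j h l v := rfl

noncomputable def bv : E j h l := WithLp.toLp 2 (bvec j h l)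

noncomputable def alphaE : (E j h l) ≃ᵃⁱ[ℝ] (E j h l) :=
  (Bli j h l).toAffineIsometryEquiv.trans
    (AffineIsometryEquiv.constVAdd ℝ (E j h l) (bv j h l))

lemma alphaE_apply (x : E j h l) : alphaE j h l x = Bapp j h l x + bv j h l := by
  unfold alphaE
  rw [AffineIsometryEquiv.coe_trans, Function.comp_apply,
    AffineIsometryEquiv.coe_constVAdd, LinearIsometryEquiv.coe_toAffineIsometryEquiv]
  show bv j h l +ᵥ Bapp j h l x = _
  rw [vadd_eq_add]
  exact add_comm _ _

noncomputable def transl (v : E j h l) : (E j h l) ≃ᵃⁱ[ℝ] (E j h l) :=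
  AffineIsometryEquiv.constVAdd ℝ (E j h l) v

lemma transl_apply (v x : E j h l) : transl j h l v x = x + v := by
  show v +ᵥ x = x + v
  exact add_comm _ _

def intVec (lam : Fin (2 * j + h + l) → ℤ) : E j h l := WithLp.toLp 2 (fun i => (lam i : ℝ))

lemma intVec_add (a b : Fin (2 * j + h + l) → ℤ) :
    intVec j h l (a + b) = intVec j h l a + intVec j h l b := by
  ext i; show ((a i + b i : ℤ) : ℝ) = (a i : ℝ) + (b i : ℝ); push_cast; ring

lemma intVec_neg (a : Fin (2 * j + h + l) → ℤ) :
    intVec j h l (-a) = -intVec j h l a := by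
  ext i; show ((-(a i) : ℤ) : ℝ) = -(a i : ℝ); push_cast; ring

lemma intVec_zero : intVec j h l 0 = 0 := by
  ext i; show ((0 : ℤ) : ℝ) = 0; norm_num

lemma Bapp_intVec (a : Fin (2 * j + h + l) → ℤ) :
    Bapp j h l (intVec j h l a) = intVec j h l (Bint j h l a) := by
  ext i; simp only [Bapp, Bint, intVec]; split_ifs <;> simp

def enInt : Fin (2 * j + h + l) → ℤ := fun i => if (i : ℕ) = 2 * j + h + l - 1 then 1 else 0

lemma bvec_bvec : bv j h l + bv j h l = intVec j h l (enInt j h l) := by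
  ext i
  show bvec j h l i + bvec j h l i = ((enInt j h l i : ℤ) : ℝ)
  simp only [bvec, enInt]; split_ifs <;> norm_num

lemma Bapp_bvec (hl : 1 ≤ l) : Bapp j h l (bv j h l) = bv j h l := by
  ext i
  show _ = bvec j h l i
  simp only [Bapp, bv, bvec]
  by_cases h1 : (i : ℕ) < 2 * j
  · have h2 : (sig j h l i : ℕ) ≠ 2 * j + h + l - 1 := by
      have := sig_val_lt j h l i h1; omega
    have h3 : (i : ℕ) ≠ 2 * j + h + l - 1 := by omega
    simp [h1, h2, h3]
  · by_cases h2 : (i : ℕ) < 2 * j + h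
    · have h3 : (i : ℕ) ≠ 2 * j + h + l - 1 := by omega
      simp [h1, h2, h3]
    · simp [h1, h2]

lemma Bint_enInt (hl : 1 ≤ l) : Bint j h l (enInt j h l) = enInt j h l := by
  funext i
  simp only [Bint, enInt]
  by_cases h1 : (i : ℕ) < 2 * j
  · have h2 : (sig j h l i : ℕ) ≠ 2 * j + h + l - 1 := by
      have := sig_val_lt j h l i h1; omega
    have h3 : (i : ℕ) ≠ 2 * j + h + l - 1 := by omega
    simp [h1, h2, h3]
  · by_cases h2 : (i : ℕ) < 2 * j + h
    · have h3 : (i : ℕ) ≠ 2 * j + h + l - 1 := by omega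
      simp [h1, h2, h3]
    · simp [h1, h2]

lemma Bint_add (a b : Fin (2 * j + h + l) → ℤ) :
    Bint j h l (a + b) = Bint j h l a + Bint j h l b := by
  funext i; simp only [Bint, Pi.add_apply]; split_ifs <;> ring

lemma Bint_neg (a : Fin (2 * j + h + l) → ℤ) : Bint j h l (-a) = -Bint j h l a := by
  funext i; simp only [Bint, Pi.neg_apply]; split_ifs <;> ring

lemma Bint_Bint (a : Fin (2 * j + h + l) → ℤ) : Bint j h l (Bint j h l a) = a := by
  funext i
  simp only [Bint]
  by_cases h1 : (i : ℕ) < 2 * j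
  · simp only [if_pos h1, if_pos (sig_val_lt j h l i h1)]
    rw [sig_sig]
  · by_cases h2 : (i : ℕ) < 2 * j + h <;> simp [h1, h2]


def IsT (γ : (E j h l) ≃ᵃⁱ[ℝ] (E j h l)) : Prop :=
  ∃ lam, ∀ x, γ x = x + intVec j h l lam

def IsF (γ : (E j h l) ≃ᵃⁱ[ℝ] (E j h l)) : Prop :=
  ∃ lam, ∀ x, γ x = Bapp j h l x + intVec j h l lam + bv j h l

lemma inv_eval (γ : (E j h l) ≃ᵃⁱ[ℝ] (E j h l)) (x y : E j h l) (hxy : γ y = x) :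
    γ⁻¹ x = y := by
  rw [← hxy, AffineIsometryEquiv.coe_inv]
  exact γ.symm_apply_apply y

lemma mul_eval (γ₁ γ₂ : (E j h l) ≃ᵃⁱ[ℝ] (E j h l)) (x : E j h l) :
    (γ₁ * γ₂) x = γ₁ (γ₂ x) := rfl

lemma alphaE_mem : alphaE j h l ∈ gammaSet j h l := by
  left
  intro x
  rw [alphaE_apply]
  funext m
  rw [add_app]
  show _ = (Bmat j h l).mulVec x m + bvec j h l m
  rw [mulVec_eq]
  rfl

lemma transl_mem (lam : Fin (2 * j + h + l) → ℤ) :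
    transl j h l (intVec j h l lam) ∈ gammaSet j h l := by
  right
  refine ⟨lam, fun x => ?_⟩
  rw [transl_apply]
  funext m
  rw [add_app]
  rfl

lemma struct (hl : 1 ≤ l) (γ : (E j h l) ≃ᵃⁱ[ℝ] (E j h l))
    (hγ : γ ∈ Subgroup.closure (gammaSet j h l)) : IsT j h l γ ∨ IsF j h l γ := by
  induction hγ using Subgroup.closure_induction with
  | mem γ hγ =>
    rcases hγ with hB | ⟨lam, hlam⟩
    · right
      refine ⟨0, fun x => ?_⟩
      rw [intVec_zero, add_zero]
      ext m
      rw [hB x]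
      show (Bmat j h l).mulVec x m + bvec j h l m = _
      rw [mulVec_eq]
      rfl
    · left
      refine ⟨lam, fun x => ?_⟩
      ext m
      rw [hlam x, add_app]
      rfl
  | one =>
    left
    refine ⟨0, fun x => ?_⟩
    rw [intVec_zero, add_zero]
    rfl
  | mul γ₁ γ₂ h₁ h₂ ih₁ ih₂ =>
    rcases ih₁ with ⟨l₁, hl₁⟩ | ⟨l₁, hl₁⟩ <;> rcases ih₂ with ⟨l₂, hl₂⟩ | ⟨l₂, hl₂⟩
    · left
      refine ⟨l₂ + l₁, fun x => ?_⟩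
      rw [mul_eval, hl₂ x, hl₁, intVec_add]
      abel
    · right
      refine ⟨l₂ + l₁, fun x => ?_⟩
      rw [mul_eval, hl₂ x, hl₁, intVec_add]
      abel
    · right
      refine ⟨Bint j h l l₂ + l₁, fun x => ?_⟩
      rw [mul_eval, hl₂ x, hl₁, Bapp_add, Bapp_intVec, intVec_add]
      abel
    · left
      refine ⟨Bint j h l l₂ + l₁ + enInt j h l, fun x => ?_⟩
      rw [mul_eval, hl₂ x, hl₁, Bapp_add, Bapp_add, Bapp_intVec, Bapp_Bapp,
        Bapp_bvec j h l hl, intVec_add, intVec_add, ← bvec_bvec]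
      abel
  | inv γ hγm ih =>
    rcases ih with ⟨lam, hlam⟩ | ⟨lam, hlam⟩
    · left
      refine ⟨-lam, fun x => ?_⟩
      refine inv_eval j h l γ x _ ?_
      rw [hlam, intVec_neg]
      abel
    · right
      refine ⟨-(Bint j h l lam) - enInt j h l, fun x => ?_⟩
      refine inv_eval j h l γ x _ ?_
      rw [hlam, Bapp_add, Bapp_add, Bapp_Bapp, Bapp_intVec, Bapp_bvec j h l hl]
      have key : Bint j h l (-(Bint j h l lam) - enInt j h l)
          = -lam - enInt j h l := by
        have e1 : -(Bint j h l lam) - enInt j h l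
            = -(Bint j h l lam) + -(enInt j h l) := by abel
        rw [e1, Bint_add, Bint_neg, Bint_neg, Bint_Bint, Bint_enInt j h l hl]
        abel
      rw [key]
      have e2 : intVec j h l (-lam - enInt j h l)
          = -(intVec j h l lam) - intVec j h l (enInt j h l) := by
        ext i
        show ((-(lam i) - enInt j h l i : ℤ) : ℝ) = _
        rw [sub_app, neg_app]
        show _ = -((lam i : ℤ) : ℝ) - ((enInt j h l i : ℤ) : ℝ)
        push_cast; ring
      rw [e2, ← bvec_bvec]
      abel


def phiZint (lam : Fin (2 * j + h + l) → ℤ) : Fin (j + l) → ℤ := fun i =>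
  if hi : (i : ℕ) < j then
    lam ⟨2 * (i : ℕ), by omega⟩ + lam ⟨2 * (i : ℕ) + 1, by omega⟩
  else if hi' : (i : ℕ) = j + l - 1 then
    2 * lam ⟨2 * j + h + l - 1, by have := i.isLt; omega⟩
  else lam ⟨2 * j + h + ((i : ℕ) - j), by have := i.isLt; omega⟩

noncomputable def phiZ (v : E j h l) : Fin (j + l) → ℤ := fun i =>
  if hi : (i : ℕ) < j then
    round (v ⟨2 * (i : ℕ), by omega⟩ + v ⟨2 * (i : ℕ) + 1, by omega⟩)
  else if hi' : (i : ℕ) = j + l - 1 then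
    round (2 * v ⟨2 * j + h + l - 1, by have := i.isLt; omega⟩)
  else round (v ⟨2 * j + h + ((i : ℕ) - j), by have := i.isLt; omega⟩)

def phi2int (lam : Fin (2 * j + h + l) → ℤ) : Fin h → ZMod 2 := fun k =>
  ((lam ⟨2 * j + (k : ℕ), by have := k.isLt; omega⟩ : ℤ) : ZMod 2)

noncomputable def phi2 (v : E j h l) : Fin h → ZMod 2 := fun k =>
  ((round (v ⟨2 * j + (k : ℕ), by have := k.isLt; omega⟩) : ℤ) : ZMod 2)

def enZ : Fin (j + l) → ℤ := fun i => if (i : ℕ) = j + l - 1 then 1 else 0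

lemma phiZ_intVec (lam : Fin (2 * j + h + l) → ℤ) :
    phiZ j h l (intVec j h l lam) = phiZint j h l lam := by
  funext i
  simp only [phiZ, phiZint, intVec]
  split_ifs
  · rw [← Int.cast_add, round_intCast]
  · rw [show (2 : ℝ) * ((lam _ : ℤ) : ℝ) = ((2 * lam _ : ℤ) : ℝ) by push_cast; ring,
      round_intCast]
  · rw [round_intCast]

lemma phi2_intVec (lam : Fin (2 * j + h + l) → ℤ) :
    phi2 j h l (intVec j h l lam) = phi2int j h l lam := by
  funext k
  simp only [phi2, phi2int, intVec, round_intCast]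

lemma phiZ_flip (hl : 1 ≤ l) (lam : Fin (2 * j + h + l) → ℤ) :
    phiZ j h l (intVec j h l lam + bv j h l) = phiZint j h l lam + enZ j l := by
  funext i
  rw [Pi.add_apply]
  by_cases h1 : (i : ℕ) < j
  · have e1 : (i : ℕ) ≠ j + l - 1 := by omega
    simp only [phiZ, phiZint, enZ, dif_pos h1, if_neg e1, add_zero]
    rw [add_app, add_app]
    have b1 : bv j h l ⟨2 * (i : ℕ), by omega⟩ = 0 := by
      show bvec j h l _ = 0
      simp only [bvec]
      rw [if_neg (by omega)]
    have b2 : bv j h l ⟨2 * (i : ℕ) + 1, by omega⟩ = 0 := by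
      show bvec j h l _ = 0
      simp only [bvec]
      rw [if_neg (by omega)]
    rw [b1, b2, add_zero, add_zero]
    show round (((lam _ : ℤ) : ℝ) + ((lam _ : ℤ) : ℝ)) = _
    rw [← Int.cast_add, round_intCast]
  · by_cases h2 : (i : ℕ) = j + l - 1
    · simp only [phiZ, phiZint, enZ, dif_neg h1, dif_pos h2, if_pos h2]
      rw [add_app]
      have b1 : bv j h l ⟨2 * j + h + l - 1, by omega⟩ = 1 / 2 := by
        show bvec j h l _ = 1 / 2
        simp only [bvec]
        simp
      rw [b1]
      show round ((2 : ℝ) * (((lam _ : ℤ) : ℝ) + 1 / 2)) = _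
      rw [show (2 : ℝ) * (((lam ⟨2 * j + h + l - 1, by omega⟩ : ℤ) : ℝ) + 1 / 2)
          = ((2 * lam ⟨2 * j + h + l - 1, by omega⟩ + 1 : ℤ) : ℝ) by push_cast; ring]
      rw [round_intCast]
    · simp only [phiZ, phiZint, enZ, dif_neg h1, dif_neg h2, if_neg h2, add_zero]
      rw [add_app]
      have b1 : bv j h l ⟨2 * j + h + ((i : ℕ) - j), by have := i.isLt; omega⟩ = 0 := by
        show bvec j h l _ = 0
        simp only [bvec]
        rw [if_neg (by have := i.isLt; omega)]
      rw [b1, add_zero]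
      show round ((lam _ : ℤ) : ℝ) = _
      rw [round_intCast]

lemma phi2_flip (hl : 1 ≤ l) (lam : Fin (2 * j + h + l) → ℤ) :
    phi2 j h l (intVec j h l lam + bv j h l) = phi2int j h l lam := by
  funext k
  simp only [phi2, phi2int, add_app]
  have b1 : bv j h l ⟨2 * j + (k : ℕ), by have := k.isLt; omega⟩ = 0 := by
    show bvec j h l _ = 0
    simp only [bvec]
    rw [if_neg (by have := k.isLt; omega)]
  show ((round (((lam _ : ℤ) : ℝ) + _) : ℤ) : ZMod 2) = _
  rw [b1, add_zero, round_intCast]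


lemma phiZint_add (a b : Fin (2 * j + h + l) → ℤ) :
    phiZint j h l (a + b) = phiZint j h l a + phiZint j h l b := by
  funext i
  simp only [phiZint, Pi.add_apply]
  split_ifs <;> ring

lemma phi2int_add (a b : Fin (2 * j + h + l) → ℤ) :
    phi2int j h l (a + b) = phi2int j h l a + phi2int j h l b := by
  funext k
  simp only [phi2int, Pi.add_apply]
  push_cast
  ring

lemma neg_zmod2 : ∀ x : ZMod 2, -x = x := by decide

lemma phiZint_Bint (hl : 1 ≤ l) (a : Fin (2 * j + h + l) → ℤ) :
    phiZint j h l (Bint j h l a) = phiZint j h l a := by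
  funext i
  simp only [phiZint, Bint]
  by_cases h1 : (i : ℕ) < j
  · rw [dif_pos h1, dif_pos h1]
    have c1 : (2 * (i : ℕ)) < 2 * j := by omega
    have c2 : (2 * (i : ℕ) + 1) < 2 * j := by omega
    rw [if_pos c1, if_pos c2]
    have s1 : sig j h l ⟨2 * (i : ℕ), by omega⟩ = ⟨2 * (i : ℕ) + 1, by omega⟩ := by
      apply Fin.ext
      rw [sig_val j h l _ c1]
      show 2 * (2 * (i : ℕ) / 2) + (1 - 2 * (i : ℕ) % 2) = 2 * (i : ℕ) + 1
      omega
    have s2 : sig j h l ⟨2 * (i : ℕ) + 1, by omega⟩ = ⟨2 * (i : ℕ), by omega⟩ := by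
      apply Fin.ext
      rw [sig_val j h l _ c2]
      show 2 * ((2 * (i : ℕ) + 1) / 2) + (1 - (2 * (i : ℕ) + 1) % 2) = 2 * (i : ℕ)
      omega
    rw [s1, s2]
    ring
  · by_cases h2 : (i : ℕ) = j + l - 1
    · rw [dif_neg h1, dif_neg h1, dif_pos h2, dif_pos h2]
      rw [if_neg (by omega), if_neg (by omega)]
    · rw [dif_neg h1, dif_neg h1, dif_neg h2, dif_neg h2]
      have := i.isLt
      rw [if_neg (by omega), if_neg (by omega)]

lemma phi2int_Bint (a : Fin (2 * j + h + l) → ℤ) :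
    phi2int j h l (Bint j h l a) = phi2int j h l a := by
  funext k
  simp only [phi2int, Bint]
  have := k.isLt
  rw [if_neg (by omega), if_pos (by omega)]
  push_cast
  rw [neg_zmod2]

lemma phiZint_enInt (hl : 1 ≤ l) :
    phiZint j h l (enInt j h l) = enZ j l + enZ j l := by
  funext i
  simp only [phiZint, enInt, enZ, Pi.add_apply]
  by_cases h1 : (i : ℕ) < j
  · rw [dif_pos h1, if_neg (by omega), if_neg (by omega), if_neg (by omega)]
  · by_cases h2 : (i : ℕ) = j + l - 1
    · rw [dif_neg h1, dif_pos h2, if_pos h2]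
      norm_num
    · rw [dif_neg h1, dif_neg h2, if_neg h2, if_neg (by have := i.isLt; omega)]
      norm_num

lemma phi2int_enInt (hl : 1 ≤ l) : phi2int j h l (enInt j h l) = 0 := by
  funext k
  simp only [phi2int, enInt]
  rw [if_neg (by have := k.isLt; omega)]
  rfl

lemma phiZint_zero : phiZint j h l 0 = 0 := by
  funext i
  simp only [phiZint, Pi.zero_apply]
  split_ifs <;> ring

lemma phi2int_zero : phi2int j h l 0 = 0 := by
  funext k
  simp only [phi2int, Pi.zero_apply]
  rfl

noncomputable def phiFun (γ : (E j h l) ≃ᵃⁱ[ℝ] (E j h l)) :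
    (Fin (j + l) → ℤ) × (Fin h → ZMod 2) :=
  (phiZ j h l (γ 0), phi2 j h l (γ 0))

lemma phiFun_T (γ : (E j h l) ≃ᵃⁱ[ℝ] (E j h l)) (lam : Fin (2 * j + h + l) → ℤ)
    (hγ : ∀ x, γ x = x + intVec j h l lam) :
    phiFun j h l γ = (phiZint j h l lam, phi2int j h l lam) := by
  have h0 : γ 0 = intVec j h l lam := by rw [hγ 0, zero_add]
  rw [phiFun, h0, phiZ_intVec, phi2_intVec]

lemma phiFun_F (hl : 1 ≤ l) (γ : (E j h l) ≃ᵃⁱ[ℝ] (E j h l)) (lam : Fin (2 * j + h + l) → ℤ)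
    (hγ : ∀ x, γ x = Bapp j h l x + intVec j h l lam + bv j h l) :
    phiFun j h l γ = (phiZint j h l lam + enZ j l, phi2int j h l lam) := by
  have h0 : γ 0 = intVec j h l lam + bv j h l := by
    rw [hγ 0, Bapp_zero, zero_add]
  rw [phiFun, h0, phiZ_flip j h l hl, phi2_flip j h l hl]

lemma phiFun_mul (hl : 1 ≤ l) (γ₁ γ₂ : (E j h l) ≃ᵃⁱ[ℝ] (E j h l))
    (h₁ : γ₁ ∈ Subgroup.closure (gammaSet j h l))
    (h₂ : γ₂ ∈ Subgroup.closure (gammaSet j h l)) :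
    phiFun j h l (γ₁ * γ₂) = phiFun j h l γ₁ + phiFun j h l γ₂ := by
  rcases struct j h l hl γ₁ h₁ with ⟨l₁, hl₁⟩ | ⟨l₁, hl₁⟩ <;>
    rcases struct j h l hl γ₂ h₂ with ⟨l₂, hl₂⟩ | ⟨l₂, hl₂⟩
  · rw [phiFun_T j h l γ₁ l₁ hl₁, phiFun_T j h l γ₂ l₂ hl₂,
      phiFun_T j h l (γ₁ * γ₂) (l₁ + l₂)
        (fun x => by rw [mul_eval, hl₂ x, hl₁, intVec_add]; abel),
      Prod.mk_add_mk, phiZint_add, phi2int_add]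
  · rw [phiFun_T j h l γ₁ l₁ hl₁, phiFun_F j h l hl γ₂ l₂ hl₂,
      phiFun_F j h l hl (γ₁ * γ₂) (l₁ + l₂)
        (fun x => by rw [mul_eval, hl₂ x, hl₁, intVec_add]; abel),
      Prod.mk_add_mk, phiZint_add, phi2int_add]
    refine congrArg₂ Prod.mk ?_ rfl
    abel
  · rw [phiFun_F j h l hl γ₁ l₁ hl₁, phiFun_T j h l γ₂ l₂ hl₂,
      phiFun_F j h l hl (γ₁ * γ₂) (Bint j h l l₂ + l₁)
        (fun x => by
          rw [mul_eval, hl₂ x, hl₁, Bapp_add, Bapp_intVec, intVec_add]; abel),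
      Prod.mk_add_mk, phiZint_add, phi2int_add, phiZint_Bint j h l hl, phi2int_Bint]
    refine congrArg₂ Prod.mk ?_ ?_
    · abel
    · abel
  · rw [phiFun_F j h l hl γ₁ l₁ hl₁, phiFun_F j h l hl γ₂ l₂ hl₂,
      phiFun_T j h l (γ₁ * γ₂) (Bint j h l l₂ + l₁ + enInt j h l)
        (fun x => by
          rw [mul_eval, hl₂ x, hl₁, Bapp_add, Bapp_add, Bapp_intVec, Bapp_Bapp,
            Bapp_bvec j h l hl, intVec_add, intVec_add, ← bvec_bvec]
          abel),
      Prod.mk_add_mk, phiZint_add, phi2int_add, phiZint_add, phi2int_add,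
      phiZint_Bint j h l hl, phi2int_Bint, phiZint_enInt j h l hl, phi2int_enInt j h l hl]
    refine congrArg₂ Prod.mk ?_ ?_
    · abel
    · abel


lemma Bapp_neg (v : E j h l) : Bapp j h l (-v) = -Bapp j h l v := by
  ext i; simp only [Bapp, neg_app]; split_ifs <;> ring

lemma Bapp_sub (v w : E j h l) : Bapp j h l (v - w) = Bapp j h l v - Bapp j h l w := by
  ext i; simp only [Bapp, sub_app]; split_ifs <;> ring

def lamOf (u : Fin (j + l) → ℤ) (w : Fin h → ZMod 2) (q : ℤ) :
    Fin (2 * j + h + l) → ℤ := fun i =>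
  if hi : (i : ℕ) < 2 * j then (if (i : ℕ) % 2 = 0 then u ⟨(i : ℕ) / 2, by omega⟩ else 0)
  else if hi2 : (i : ℕ) < 2 * j + h then ((w ⟨(i : ℕ) - 2 * j, by omega⟩).val : ℤ)
  else if (i : ℕ) = 2 * j + h + l - 1 then q
  else u ⟨j + ((i : ℕ) - (2 * j + h)), by have := i.isLt; omega⟩

lemma phiZint_lamOf (hl : 1 ≤ l) (u : Fin (j + l) → ℤ) (w : Fin h → ZMod 2) (q : ℤ)
    (i : Fin (j + l)) :
    phiZint j h l (lamOf j h l u w q) i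
      = if (i : ℕ) = j + l - 1 then 2 * q else u i := by
  by_cases h1 : (i : ℕ) < j
  · rw [if_neg (by omega)]
    simp only [phiZint, dif_pos h1, lamOf]
    rw [dif_pos (show 2 * (i : ℕ) < 2 * j by omega),
      dif_pos (show 2 * (i : ℕ) + 1 < 2 * j by omega),
      if_pos (show 2 * (i : ℕ) % 2 = 0 by omega),
      if_neg (show ¬ (2 * (i : ℕ) + 1) % 2 = 0 by omega), add_zero]
    have : (⟨2 * (i : ℕ) / 2, by omega⟩ : Fin (j + l)) = i := by
      apply Fin.ext; show 2 * (i : ℕ) / 2 = (i : ℕ); omega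
    rw [this]
  · by_cases h2 : (i : ℕ) = j + l - 1
    · rw [if_pos h2]
      simp only [phiZint, dif_neg h1, dif_pos h2, lamOf]
      rw [dif_neg (by omega), dif_neg (by omega)]
      simp
    · rw [if_neg h2]
      simp only [phiZint, dif_neg h1, dif_neg h2, lamOf]
      have hlt := i.isLt
      rw [dif_neg (by omega), dif_neg (by omega), if_neg (by omega)]
      have : (⟨j + (2 * j + h + ((i : ℕ) - j) - (2 * j + h)), by omega⟩ : Fin (j + l)) = i := by
        apply Fin.ext; show j + (2 * j + h + ((i : ℕ) - j) - (2 * j + h)) = (i : ℕ); omega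
      rw [this]

lemma phi2int_lamOf (u : Fin (j + l) → ℤ) (w : Fin h → ZMod 2) (q : ℤ) :
    phi2int j h l (lamOf j h l u w q) = w := by
  funext k
  have hk := k.isLt
  simp only [phi2int, lamOf]
  rw [dif_neg (by omega), dif_pos (by omega)]
  have e : (⟨2 * j + (k : ℕ) - 2 * j, by omega⟩ : Fin h) = k := by
    apply Fin.ext; show 2 * j + (k : ℕ) - 2 * j = (k : ℕ); omega
  rw [e, Int.cast_natCast]
  exact ZMod.natCast_rightInverse (w k)


def muOf (lam : Fin (2 * j + h + l) → ℤ) : Fin (2 * j + h + l) → ℤ := fun i =>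
  if h1 : (i : ℕ) < 2 * j then
    (if (i : ℕ) % 2 = 1 then lam ⟨(i : ℕ) - 1, by have := i.isLt; omega⟩ else 0)
  else if (i : ℕ) < 2 * j + h then -(lam i / 2) else 0

lemma muOf_val (lam : Fin (2 * j + h + l) → ℤ) (a : ℕ) (ha : a < 2 * j + h + l) :
    muOf j h l lam ⟨a, ha⟩ =
      if h1 : a < 2 * j then (if a % 2 = 1 then lam ⟨a - 1, by omega⟩ else 0)
      else if a < 2 * j + h then -(lam ⟨a, ha⟩ / 2) else 0 := rfl

lemma phiZint_val (lam : Fin (2 * j + h + l) → ℤ) (a : ℕ) (ha : a < j + l) :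
    phiZint j h l lam ⟨a, ha⟩ =
      if h1 : a < j then lam ⟨2 * a, by omega⟩ + lam ⟨2 * a + 1, by omega⟩
      else if a = j + l - 1 then 2 * lam ⟨2 * j + h + l - 1, by omega⟩
      else lam ⟨2 * j + h + (a - j), by omega⟩ := rfl

lemma phi2int_val (lam : Fin (2 * j + h + l) → ℤ) (a : ℕ) (ha : a < h) :
    phi2int j h l lam ⟨a, ha⟩ = ((lam ⟨2 * j + a, by omega⟩ : ℤ) : ZMod 2) := rfl

lemma Bint_val (lam : Fin (2 * j + h + l) → ℤ) (a : ℕ) (ha : a < 2 * j + h + l) :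
    Bint j h l lam ⟨a, ha⟩ =
      if h1 : a < 2 * j then lam ⟨2 * (a / 2) + (1 - a % 2), by omega⟩
      else if a < 2 * j + h then -(lam ⟨a, ha⟩) else lam ⟨a, ha⟩ := by
  simp only [Bint]
  by_cases h1 : a < 2 * j
  · rw [if_pos h1, dif_pos h1]
    congr 1
    apply Fin.ext
    rw [sig_val j h l ⟨a, ha⟩ h1]
  · rw [if_neg h1, dif_neg h1]

set_option maxHeartbeats 1000000 in
lemma Bint_muOf (hl : 1 ≤ l) (lam : Fin (2 * j + h + l) → ℤ)
    (hc1 : phiZint j h l lam = 0) (hc2 : phi2int j h l lam = 0) :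
    ∀ i, Bint j h l (muOf j h l lam) i - muOf j h l lam i = lam i := by
  have main : ∀ (a : ℕ) (ha : a < 2 * j + h + l),
      Bint j h l (muOf j h l lam) ⟨a, ha⟩ - muOf j h l lam ⟨a, ha⟩ = lam ⟨a, ha⟩ := by
    intro a ha
    rw [Bint_val, muOf_val]
    by_cases h1 : a < 2 * j
    · rw [dif_pos h1, dif_pos h1]
      by_cases h2 : a % 2 = 0
      · rw [if_neg (by omega)]
        have e1 : (2 * (a / 2) + (1 - a % 2)) = a + 1 := by omega
        have e2 : (⟨2 * (a / 2) + (1 - a % 2), by omega⟩ : Fin (2 * j + h + l))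
            = ⟨a + 1, by omega⟩ := by simp only [Fin.mk.injEq]; omega
        simp only [e2]
        rw [muOf_val]
        rw [dif_pos (show a + 1 < 2 * j by omega), if_pos (show (a + 1) % 2 = 1 by omega)]
        have e3 : (⟨a + 1 - 1, by omega⟩ : Fin (2 * j + h + l)) = ⟨a, ha⟩ := by
          simp only [Fin.mk.injEq]; omega
        simp only [e3]
        ring
      · rw [if_pos (by omega)]
        have e2 : (⟨2 * (a / 2) + (1 - a % 2), by omega⟩ : Fin (2 * j + h + l))
            = ⟨a - 1, by omega⟩ := by simp only [Fin.mk.injEq]; omega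
        simp only [e2]
        rw [muOf_val]
        rw [dif_pos (show a - 1 < 2 * j by omega), if_neg (show ¬ (a - 1) % 2 = 1 by omega)]
        -- need lam ⟨a-1⟩ + lam ⟨a⟩ = 0
        have hb := congrFun hc1 ⟨a / 2, by omega⟩
        rw [phiZint_val] at hb
        rw [dif_pos (show a / 2 < j by omega)] at hb
        have e3 : (⟨2 * (a / 2), by omega⟩ : Fin (2 * j + h + l)) = ⟨a - 1, by omega⟩ := by
          simp only [Fin.mk.injEq]; omega
        have e4 : (⟨2 * (a / 2) + 1, by omega⟩ : Fin (2 * j + h + l)) = ⟨a, ha⟩ := by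
          simp only [Fin.mk.injEq]; omega
        simp only [e3, e4] at hb
        simp only [Pi.zero_apply] at hb
        omega
    · rw [dif_neg h1, dif_neg h1]
      by_cases h2 : a < 2 * j + h
      · rw [if_pos h2, if_pos h2]
        have hk := congrFun hc2 ⟨a - 2 * j, by omega⟩
        rw [phi2int_val] at hk
        have e1 : (⟨2 * j + (a - 2 * j), by omega⟩ : Fin (2 * j + h + l)) = ⟨a, ha⟩ := by
          simp only [Fin.mk.injEq]; omega
        simp only [e1] at hk
        simp only [Pi.zero_apply] at hk
        have hdvd : (2 : ℤ) ∣ lam ⟨a, ha⟩ := by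
          have := (ZMod.intCast_zmod_eq_zero_iff_dvd (lam ⟨a, ha⟩) 2).mp hk
          exact_mod_cast this
        omega
      · rw [if_neg h2, if_neg h2]
        have hlam0 : lam ⟨a, ha⟩ = 0 := by
          by_cases h3 : a = 2 * j + h + l - 1
          · have hb := congrFun hc1 ⟨j + l - 1, by omega⟩
            rw [phiZint_val] at hb
            rw [dif_neg (show ¬ (j + l - 1 < j) by omega),
              if_pos (show j + l - 1 = j + l - 1 from rfl)] at hb
            have e1 : (⟨2 * j + h + l - 1, by omega⟩ : Fin (2 * j + h + l)) = ⟨a, ha⟩ := by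
              simp only [Fin.mk.injEq]; omega
            simp only [e1] at hb
            simp only [Pi.zero_apply] at hb
            omega
          · have hb := congrFun hc1 ⟨j + (a - (2 * j + h)), by omega⟩
            rw [phiZint_val] at hb
            rw [dif_neg (show ¬ (j + (a - (2 * j + h)) < j) by omega),
              if_neg (show ¬ (j + (a - (2 * j + h)) = j + l - 1) by omega)] at hb
            have e1 : (⟨2 * j + h + (j + (a - (2 * j + h)) - j), by omega⟩ :
                Fin (2 * j + h + l)) = ⟨a, ha⟩ := by
              simp only [Fin.mk.injEq]; omega
            simp only [e1] at hb
            simp only [Pi.zero_apply] at hb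
            exact hb
        rw [hlam0]
        ring
  intro i
  have := main (i : ℕ) i.isLt
  simpa using this


open scoped commutatorElement in
lemma ker_is_commutator (hl : 1 ≤ l) (γ : (E j h l) ≃ᵃⁱ[ℝ] (E j h l))
    (hγ : γ ∈ Subgroup.closure (gammaSet j h l)) (hker : phiFun j h l γ = 0) :
    ∃ a b : (Subgroup.closure (gammaSet j h l)),
      (⟨γ, hγ⟩ : Subgroup.closure (gammaSet j h l)) = ⁅a, b⁆ := by
  rcases struct j h l hl γ hγ with ⟨lam, hlam⟩ | ⟨lam, hlam⟩
  · -- translation case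
    rw [phiFun_T j h l γ lam hlam] at hker
    have hc1 : phiZint j h l lam = 0 := congrArg Prod.fst hker
    have hc2 : phi2int j h l lam = 0 := congrArg Prod.snd hker
    refine ⟨⟨alphaE j h l, Subgroup.subset_closure (alphaE_mem j h l)⟩,
      ⟨transl j h l (intVec j h l (muOf j h l lam)),
        Subgroup.subset_closure (transl_mem j h l _)⟩, ?_⟩
    apply Subtype.ext
    show γ = alphaE j h l * transl j h l (intVec j h l (muOf j h l lam)) *
      (alphaE j h l)⁻¹ * (transl j h l (intVec j h l (muOf j h l lam)))⁻¹
    apply AffineIsometryEquiv.ext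
    intro x
    have i1 : (transl j h l (intVec j h l (muOf j h l lam)))⁻¹ x
        = x - intVec j h l (muOf j h l lam) := by
      refine inv_eval j h l _ x _ ?_
      rw [transl_apply]
      abel
    have i2 : (alphaE j h l)⁻¹ (x - intVec j h l (muOf j h l lam))
        = Bapp j h l (x - intVec j h l (muOf j h l lam)) - bv j h l := by
      refine inv_eval j h l _ _ _ ?_
      rw [alphaE_apply, Bapp_sub, Bapp_Bapp, Bapp_bvec j h l hl]
      abel
    rw [mul_eval, mul_eval, mul_eval, i1, i2, transl_apply, alphaE_apply, hlam x]
    rw [Bapp_add, Bapp_sub, Bapp_Bapp, Bapp_bvec j h l hl, Bapp_intVec]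
    have hkey : intVec j h l (Bint j h l (muOf j h l lam))
        - intVec j h l (muOf j h l lam) = intVec j h l lam := by
      ext i
      rw [sub_app]
      show ((Bint j h l (muOf j h l lam) i : ℤ) : ℝ) - ((muOf j h l lam i : ℤ) : ℝ)
        = ((lam i : ℤ) : ℝ)
      rw [← Int.cast_sub]
      exact congrArg _ (Bint_muOf j h l hl lam hc1 hc2 i)
    rw [← hkey]
    abel
  · -- flip case: impossible
    exfalso
    rw [phiFun_F j h l hl γ lam hlam] at hker
    have h0 : (phiZint j h l lam + enZ j l) ⟨j + l - 1, by omega⟩ = 0 := by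
      have := congrFun (congrArg Prod.fst hker) ⟨j + l - 1, by omega⟩
      simpa using this
    rw [Pi.add_apply, phiZint_val] at h0
    rw [dif_neg (show ¬ (j + l - 1 < j) by omega),
      if_pos (show j + l - 1 = j + l - 1 from rfl)] at h0
    have henz : enZ j l ⟨j + l - 1, by omega⟩ = 1 := by
      simp [enZ]
    rw [henz] at h0
    omega


noncomputable def phiHom (hl : 1 ≤ l) : (Subgroup.closure (gammaSet j h l)) →*
    Multiplicative ((Fin (j + l) → ℤ) × (Fin h → ZMod 2)) where
  toFun γ := Multiplicative.ofAdd (phiFun j h l γ.1)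
  map_one' := by
    have h1 : phiFun j h l ((1 : Subgroup.closure (gammaSet j h l)) : _) = 0 := by
      rw [phiFun_T j h l _ 0 (fun x => by rw [intVec_zero, add_zero]; rfl),
        phiZint_zero, phi2int_zero]
      rfl
    show Multiplicative.ofAdd (phiFun j h l ((1 : Subgroup.closure (gammaSet j h l)) : _)) = 1
    rw [h1]
    rfl
  map_mul' a b := by
    have hm := phiFun_mul j h l hl a.1 b.1 a.2 b.2
    show Multiplicative.ofAdd (phiFun j h l (a.1 * b.1)) = _
    rw [hm]
    rfl

lemma phiHom_surj (hl : 1 ≤ l) : Function.Surjective (phiHom j h l hl) := by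
  intro c
  set u := (Multiplicative.toAdd c).1 with hu
  set w := (Multiplicative.toAdd c).2 with hw
  have hc : c = Multiplicative.ofAdd (u, w) := rfl
  set m := u ⟨j + l - 1, by omega⟩ with hm
  by_cases hpar : m % 2 = 0
  · refine ⟨⟨transl j h l (intVec j h l (lamOf j h l u w (m / 2))),
      Subgroup.subset_closure (transl_mem j h l _)⟩, ?_⟩
    show Multiplicative.ofAdd (phiFun j h l (transl j h l _)) = c
    rw [phiFun_T j h l _ _ (fun x => transl_apply j h l _ x)]
    have h1 : phiZint j h l (lamOf j h l u w (m / 2)) = u := by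
      funext i
      rw [phiZint_lamOf j h l hl]
      by_cases hi : (i : ℕ) = j + l - 1
      · rw [if_pos hi]
        have : u i = m := by
          rw [hm]
          exact congrArg u (Fin.ext hi)
        omega
      · rw [if_neg hi]
    rw [h1, phi2int_lamOf, hc]
  · refine ⟨⟨transl j h l (intVec j h l (lamOf j h l u w (m / 2))) * alphaE j h l,
      Subgroup.mul_mem _ (Subgroup.subset_closure (transl_mem j h l _))
        (Subgroup.subset_closure (alphaE_mem j h l))⟩, ?_⟩
    show Multiplicative.ofAdd (phiFun j h l _) = c
    rw [phiFun_F j h l hl _ _ (fun x => by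
      rw [mul_eval, alphaE_apply, transl_apply]
      abel)]
    have h1 : phiZint j h l (lamOf j h l u w (m / 2)) + enZ j l = u := by
      funext i
      rw [Pi.add_apply, phiZint_lamOf j h l hl]
      by_cases hi : (i : ℕ) = j + l - 1
      · rw [if_pos hi]
        have hui : u i = m := by
          rw [hm]
          exact congrArg u (Fin.ext hi)
        have he : enZ j l i = 1 := by
          simp only [enZ]
          rw [if_pos hi]
        rw [he]
        omega
      · rw [if_neg hi]
        have he : enZ j l i = 0 := by
          simp only [enZ]
          rw [if_neg hi]
        rw [he, add_zero]
    rw [h1, phi2int_lamOf, hc]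

lemma main_thm (hl : 1 ≤ l) :
    Nonempty (Abelianization (Subgroup.closure (gammaSet j h l)) ≃*
      Multiplicative ((Fin (j + l) → ℤ) × (Fin h → ZMod 2))) := by
  refine ⟨MulEquiv.ofBijective (Abelianization.lift (phiHom j h l hl)) ⟨?_, ?_⟩⟩
  · rw [injective_iff_map_eq_one]
    intro x
    refine QuotientGroup.induction_on x ?_
    intro g hg
    have hφ : phiHom j h l hl g = 1 := by
      have h2 : Abelianization.lift (phiHom j h l hl) (Abelianization.of g)
          = phiHom j h l hl g := Abelianization.lift_apply_of _ _
      rw [← h2]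
      exact hg
    have hker : phiFun j h l g.1 = 0 := by
      exact congrArg Multiplicative.toAdd hφ
    obtain ⟨a, b, hab⟩ := ker_is_commutator j h l hl g.1 g.2 hker
    have hg' : (⟨g.1, g.2⟩ : Subgroup.closure (gammaSet j h l)) = g := rfl
    rw [hg'] at hab
    show Abelianization.of g = 1
    rw [hab, map_commutatorElement]
    exact commutatorElement_eq_one_iff_mul_comm.mpr (mul_comm _ _)
  · intro c
    obtain ⟨g, hgc⟩ := phiHom_surj j h l hl c
    exact ⟨Abelianization.of g, by rw [Abelianization.lift_apply_of]; exact hgc⟩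

end GammaAux

/-- The abelianization of `Γ_{j,h}` is isomorphic to `ℤ^{j+l} × (ℤ/2ℤ)^h`. -/
theorem gammaJH_abelianization (j h l : ℕ) (hl : 1 ≤ l) (hjh : j + h ≠ 0) :
    Nonempty (Abelianization (GammaJH j h l) ≃*
      Multiplicative ((Fin (j + l) → ℤ) × (Fin h → ZMod 2))) := by
  exact GammaAux.main_thm j h l hl
end

section
/- For every 1 ≤ p ≤ n, the dimension of the subspace of the p-th exterior power ⋀^p(ℝ^n) fixed pointwise by the induced map ⋀^p B_{j,h} equals ∑_{i=0}^{⌊p/2⌋} C(j+h, 2i) · C(j+l, p−2i), where C denotes the binomial coefficient. -/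
open ExteriorAlgebra

set_option linter.unusedSectionVars false
set_option linter.unusedVariables false
set_option maxHeartbeats 1000000

namespace ExtAux

open Finset Module Submodule ExteriorAlgebra

/-- rewriting a function application at propositionally equal Fin indices -/
lemma xeq {N : ℕ} {α : Type*} (x : Fin N → α) (a b : ℕ) (ha : a < N) (hb : b < N)
    (hab : a = b) : x ⟨a, ha⟩ = x ⟨b, hb⟩ := by subst hab; rfl

/-- Dimension of the fixed space of an operator diagonal in a basis. -/
lemma finrank_ker_sub_id_of_eigen {K V ι : Type*} [Field K] [DecidableEq K]
    [AddCommGroup V] [Module K V] [Fintype ι] [DecidableEq ι]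
    (b : Basis ι K V) (A : V →ₗ[K] V) (c : ι → K) (hA : ∀ i, A (b i) = c i • b i) :
    Module.finrank K (LinearMap.ker (A - LinearMap.id)) =
      (Finset.univ.filter fun i => c i = 1).card := by
  classical
  have hker : LinearMap.ker (A - LinearMap.id) =
      span K (Set.range fun i : {i // c i = 1} => b i.1) := by
    apply le_antisymm
    · intro x hx
      have hAx : A x = x := by
        have := LinearMap.mem_ker.mp hx
        simpa [LinearMap.sub_apply, sub_eq_zero] using this
      have hx1 : x = ∑ i, (b.repr x i * c i) • b i := by
        conv_lhs => rw [← hAx, ← b.sum_repr x]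
        rw [map_sum]
        refine Finset.sum_congr rfl fun i _ => ?_
        rw [LinearMap.map_smul, hA i, smul_smul]
      have hco : ∀ i, b.repr x i = b.repr x i * c i := by
        intro i
        conv_lhs => rw [hx1]
        rw [b.repr_sum_self]
      have hzero : ∀ i, c i ≠ 1 → b.repr x i = 0 := by
        intro i hci
        have := hco i
        have h2 : b.repr x i * (c i - 1) = 0 := by linear_combination -this
        rcases mul_eq_zero.mp h2 with h | h
        · exact h
        · exact absurd (by linear_combination h) hci
      have hx2 : x = ∑ i ∈ Finset.univ.filter fun i => c i = 1, b.repr x i • b i := by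
        conv_lhs => rw [← b.sum_repr x]
        refine (Finset.sum_subset (Finset.subset_univ _) fun i _ hi => ?_).symm
        rw [hzero i (by simpa using hi), zero_smul]
      rw [hx2]
      refine Submodule.sum_mem _ fun i hi => Submodule.smul_mem _ _ ?_
      exact subset_span ⟨⟨i, (Finset.mem_filter.mp hi).2⟩, rfl⟩
    · rw [span_le]
      rintro _ ⟨⟨i, hci⟩, rfl⟩
      simp only [SetLike.mem_coe, LinearMap.mem_ker, LinearMap.sub_apply, LinearMap.id_apply]
      rw [hA i, hci, one_smul, sub_self]
  rw [hker]
  have hli : LinearIndependent K (fun i : {i // c i = 1} => b i.1) :=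
    b.linearIndependent.comp Subtype.val Subtype.val_injective
  rw [finrank_span_eq_card hli]
  simp [Fintype.card_subtype]


section General

variable {K M ι : Type*} [Field K] [AddCommGroup M] [Module K M]
  [Fintype ι] [LinearOrder ι]

/-- The determinant-based alternating form used to separate basis wedges. -/
noncomputable def detFunc (p : ℕ) (b : Basis ι K M) (s : {s : Finset ι // s.card = p}) :
    M [⋀^Fin p]→ₗ[K] K :=
  (Matrix.detRowAlternating (n := Fin p) (R := K)).compLinearMap
    (LinearMap.pi fun k => b.coord (s.1.orderIsoOfFin s.2 k))

lemma detFunc_apply_family (p : ℕ) (b : Basis ι K M) (s t : {s : Finset ι // s.card = p}) :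
    detFunc p b s (fun i => b (t.1.orderIsoOfFin t.2 i)) = if t = s then 1 else 0 := by
  classical
  have hmat : ∀ i k, (LinearMap.pi fun k => b.coord (s.1.orderIsoOfFin s.2 k))
      (b (t.1.orderIsoOfFin t.2 i)) k
      = if (t.1.orderIsoOfFin t.2 i : ι) = (s.1.orderIsoOfFin s.2 k : ι) then 1 else 0 := by
    intro i k
    simp [LinearMap.pi_apply, Basis.coord_apply, Basis.repr_self, Finsupp.single_apply]
    congr 1
  rw [detFunc]
  simp only [AlternatingMap.compLinearMap_apply]
  rw [Matrix.detRowAlternating]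
  split_ifs with ht
  · subst ht
    have : (fun i => (LinearMap.pi fun k => b.coord (t.1.orderIsoOfFin t.2 k))
        (b (t.1.orderIsoOfFin t.2 i))) = (1 : Matrix (Fin p) (Fin p) K) := by
      ext i k
      rw [hmat]
      by_cases hik : i = k
      · subst hik; simp [Matrix.one_apply]
      · rw [if_neg, Matrix.one_apply_ne hik
      ]
        intro hcontra
        exact hik (by
          have := (t.1.orderIsoOfFin t.2).injective (Subtype.ext hcontra)
          exact this)
    erw [this]
    exact Matrix.det_one
  · -- there is an element of s not in t
    have hne : ¬ s.1 ⊆ t.1 := by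
      intro hsub
      exact ht (Subtype.ext (Finset.eq_of_subset_of_card_le hsub (by rw [s.2, t.2])).symm)
    obtain ⟨x, hxs, hxt⟩ := Finset.not_subset.mp hne
    set k₀ : Fin p := (s.1.orderIsoOfFin s.2).symm ⟨x, hxs⟩
    apply Matrix.det_eq_zero_of_column_eq_zero k₀
    intro i
    show (LinearMap.pi fun k => b.coord (s.1.orderIsoOfFin s.2 k))
        (b (t.1.orderIsoOfFin t.2 i)) k₀ = 0
    rw [hmat]
    rw [if_neg]
    intro hcontra
    apply hxt
    have : (s.1.orderIsoOfFin s.2 k₀ : ι) = x := by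
      show ((s.1.orderIsoOfFin s.2) ((s.1.orderIsoOfFin s.2).symm ⟨x, hxs⟩) : ι) = x
      rw [OrderIso.apply_symm_apply]
    rw [this] at hcontra
    rw [← hcontra]
    exact Finset.coe_mem _
lemma linearIndependent_family (p : ℕ) (b : Basis ι K M) :
    LinearIndependent K (fun s : {s : Finset ι // s.card = p} => ιMulti_family K p ⇑b s) := by
  classical
  rw [Fintype.linearIndependent_iff]
  intro a ha s₀
  have hφ := congrArg (liftAlternating (R := K) (M := M) (N := K)
    (Function.update 0 p (detFunc p b s₀))) ha
  rw [map_sum, map_zero] at hφ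
  have : ∀ t : {s : Finset ι // s.card = p},
      (liftAlternating (Function.update 0 p (detFunc p b s₀)))
        (a t • ιMulti_family K p ⇑b t) = a t * (if t = s₀ then 1 else 0) := by
    intro t
    rw [map_smul, smul_eq_mul]
    congr 1
    refine Eq.trans ?_ (detFunc_apply_family p b s₀ t)
    exact (liftAlternating_apply_ιMulti _ _).trans (by rw [Function.update_self]; rfl)
  rw [Finset.sum_congr rfl fun t _ => this t] at hφ
  simpa using hφ

lemma span_family (p : ℕ) (b : Basis ι K M) :
    Submodule.span K (Set.range (ιMulti_family K p ⇑b)) = ⋀[K]^p M := by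
  classical
  apply le_antisymm
  · rw [span_le, Set.range_subset_iff]
    intro s
    exact ιMulti_range K p ⟨_, rfl⟩
  · rw [← ιMulti_span_fixedDegree, span_le, Set.range_subset_iff]
    intro v
    have hv : (fun k => ∑ i : ι, b.repr (v k) i • b i) = v := by
      funext k; exact b.sum_repr (v k)
    have expand : ιMulti K p v =
        ∑ r : Fin p → ι, (∏ k, b.repr (v k) (r k)) • ιMulti K p (fun k => b (r k)) := by
      conv_lhs => rw [← hv]
      have h1 := (ιMulti K p (M := M)).toMultilinearMap.map_sum
        (g := fun k i => b.repr (v k) i • b i)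
      have h2 : ∀ r : Fin p → ι, (ιMulti K p (M := M)).toMultilinearMap
          (fun k => b.repr (v k) (r k) • b (r k))
          = (∏ k, b.repr (v k) (r k)) • ιMulti K p (fun k => b (r k)) :=
        fun r => (ιMulti K p (M := M)).toMultilinearMap.map_smul_univ _ _
      calc (ιMulti K p) (fun k => ∑ i : ι, b.repr (v k) i • b i)
          = ∑ r : Fin p → ι, (ιMulti K p (M := M)).toMultilinearMap
              (fun k => b.repr (v k) (r k) • b (r k)) := h1
        _ = _ := Finset.sum_congr rfl fun r _ => h2 r
    rw [expand]
    refine Submodule.sum_mem _ fun r _ => Submodule.smul_mem _ _ ?_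
    by_cases hr : Function.Injective r
    · -- reorder into a sorted wedge
      set s : Finset ι := Finset.univ.image r with hs_def
      have hs : s.card = p := by
        rw [hs_def, Finset.card_image_of_injective _ hr, Finset.card_univ, Fintype.card_fin]
      have hrange : Set.range r = (s : Set ι) := by
        rw [hs_def, Finset.coe_image, Finset.coe_univ, Set.image_univ]
      set σ := s.orderIsoOfFin hs
      set e : Fin p ≃ Fin p :=
        (Equiv.ofInjective r hr).trans ((Equiv.setCongr hrange).trans σ.toEquiv.symm)
      have key : ∀ k, (σ (e k) : ι) = r k := by
        intro k
        have : e k = σ.symm ⟨r k, by rw [← Finset.mem_coe, ← hrange]; exact ⟨k, rfl⟩⟩ := rfl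
        rw [this]
        show ((σ (σ.symm _)) : ι) = r k
        rw [OrderIso.apply_symm_apply]
      have hcomp : (fun k => b (σ k)) ∘ e = fun k => b (r k) := by
        funext k
        simp only [Function.comp_apply]
        rw [key k]
      have hperm := (ιMulti K p (M := M)).map_perm (fun k => b (σ k)) e
      rw [hcomp] at hperm
      rw [hperm]
      have hmem : ιMulti_family K p ⇑b ⟨s, hs⟩ ∈
          Submodule.span K (Set.range (ιMulti_family K p ⇑b)) :=
        subset_span ⟨⟨s, hs⟩, rfl⟩
      rcases Int.units_eq_one_or (Equiv.Perm.sign e) with h | h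
      · rw [h, one_smul]; exact hmem
      · rw [h]
        have : (-1 : ℤˣ) • ιMulti K p (M := M) (fun k => b (σ k))
            = -(ιMulti K p (M := M) (fun k => b (σ k))) := by
          simp
        rw [this]
        exact Submodule.neg_mem _ hmem
    · have hbr : ¬Function.Injective (fun k => b (r k)) := fun hinj =>
        hr fun a c hac => hinj (congrArg b hac)
      rw [AlternatingMap.map_eq_zero_of_not_injective _ _ hbr]
      exact Submodule.zero_mem _


/-- the wedge basis family as elements of the submodule -/
noncomputable def wedge (p : ℕ) (b : Basis ι K M) (s : {s : Finset ι // s.card = p}) :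
    ⋀[K]^p M :=
  ⟨ιMulti_family K p ⇑b s, ιMulti_range K p ⟨_, rfl⟩⟩

noncomputable def wedgeBasis (p : ℕ) (b : Basis ι K M) :
    Basis {s : Finset ι // s.card = p} K (⋀[K]^p M) :=
  Basis.mk (v := wedge p b)
    (LinearIndependent.of_comp (⋀[K]^p M).subtype (by
      have : ((⋀[K]^p M).subtype ∘ wedge p b) = ιMulti_family K p ⇑b := rfl
      rw [this]
      exact linearIndependent_family p b))
    (by
      intro x _
      have hx : (x : ExteriorAlgebra K M) ∈
          Submodule.span K (Set.range (ιMulti_family K p ⇑b)) := by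
        rw [span_family p b]; exact x.2
      have heq : Set.range (ιMulti_family K p ⇑b)
          = (⋀[K]^p M).subtype '' Set.range (wedge p b) := by
        rw [← Set.range_comp]; rfl
      rw [heq, ← Submodule.map_span] at hx
      obtain ⟨y, hy, hyx⟩ := hx
      have : y = x := Subtype.ext hyx
      rwa [← this])

lemma wedgeBasis_apply (p : ℕ) (b : Basis ι K M) (s : {s : Finset ι // s.card = p}) :
    wedgeBasis p b s = wedge p b s := Basis.mk_apply _ _ _

lemma exteriorPowerMap_wedge (p : ℕ) (b : Basis ι K M) (f : M →ₗ[K] M) (c : ι → K)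
    (hf : ∀ i, f (b i) = c i • b i) (s : {s : Finset ι // s.card = p}) :
    exteriorPowerMap p f (wedge p b s) = (∏ i ∈ s.1, c i) • wedge p b s := by
  classical
  apply Subtype.ext
  rw [exteriorPowerMap, LinearMap.restrict_apply]
  show (ExteriorAlgebra.map f) (ιMulti_family K p ⇑b s)
      = ((∏ i ∈ s.1, c i) • wedge p b s : ⋀[K]^p M)
  show (ExteriorAlgebra.map f) (ιMulti K p (fun i => b (s.1.orderIsoOfFin s.2 i))) = _
  rw [map_apply_ιMulti]
  have hcomp : (⇑f ∘ fun i => b (s.1.orderIsoOfFin s.2 i))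
      = fun i => c (s.1.orderIsoOfFin s.2 i) • b (s.1.orderIsoOfFin s.2 i) := by
    funext i; exact hf _
  rw [hcomp]
  have hsmul := (ιMulti K p (M := M)).toMultilinearMap.map_smul_univ
    (fun i => c (s.1.orderIsoOfFin s.2 i)) (fun i => b (s.1.orderIsoOfFin s.2 i))
  have hprod : (∏ i : Fin p, c (s.1.orderIsoOfFin s.2 i)) = ∏ i ∈ s.1, c i := by
    rw [← Finset.prod_coe_sort s.1 c]
    exact Fintype.prod_equiv (s.1.orderIsoOfFin s.2).toEquiv _ _ (fun i => rfl)
  have hsmul' : (ιMulti K p) (fun i => c (s.1.orderIsoOfFin s.2 i) • b (s.1.orderIsoOfFin s.2 i))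
      = (∏ i : Fin p, c (s.1.orderIsoOfFin s.2 i)) •
        (ιMulti K p) (fun i => b (s.1.orderIsoOfFin s.2 i)) := hsmul
  rw [hsmul', hprod]
  rfl

lemma finrank_fixed_general [DecidableEq K] (p : ℕ) (b : Basis ι K M) (f : M →ₗ[K] M)
    (c : ι → K) (hf : ∀ i, f (b i) = c i • b i) :
    Module.finrank K (LinearMap.ker (exteriorPowerMap p f - LinearMap.id)) =
      (Finset.univ.filter fun s : {s : Finset ι // s.card = p} =>
        (∏ i ∈ s.1, c i) = 1).card := by
  classical
  refine finrank_ker_sub_id_of_eigen (wedgeBasis p b) (exteriorPowerMap p f)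
    (fun s => ∏ i ∈ s.1, c i) fun s => ?_
  rw [wedgeBasis_apply]
  exact exteriorPowerMap_wedge p b f c hf s


end General

variable (j h l : ℕ)

/-- eigenvector transformation -/
def Tfun (x : Fin (2*j+h+l) → ℝ) (i : Fin (2*j+h+l)) : ℝ :=
  if hi : (i : ℕ) < 2*j then
    x ⟨2*((i:ℕ)/2), by omega⟩ +
      (if (i:ℕ) % 2 = 0 then x ⟨2*((i:ℕ)/2)+1, by omega⟩ else - x ⟨2*((i:ℕ)/2)+1, by omega⟩)
  else x i

/-- eigenvalues -/
def epsf (i : Fin (2*j+h+l)) : ℝ :=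
  if ((i:ℕ) < 2*j ∧ (i:ℕ) % 2 = 1) ∨ (2*j ≤ (i:ℕ) ∧ (i:ℕ) < 2*j+h) then -1 else 1

lemma epsf_val (m : ℕ) (hmn : m < 2*j+h+l) :
    epsf j h l ⟨m, hmn⟩ =
      if (m < 2*j ∧ m % 2 = 1) ∨ (2*j ≤ m ∧ m < 2*j+h) then -1 else 1 := rfl

lemma Tfun_mk_lt (x : Fin (2*j+h+l) → ℝ) (m : ℕ) (hm : m < 2*j) (hmn : m < 2*j+h+l) :
    Tfun j h l x ⟨m, hmn⟩ = x ⟨2*(m/2), by omega⟩ +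
      (if m % 2 = 0 then x ⟨2*(m/2)+1, by omega⟩ else - x ⟨2*(m/2)+1, by omega⟩) := by
  simp only [Tfun]
  rw [dif_pos hm]

lemma Tfun_mk_ge (x : Fin (2*j+h+l) → ℝ) (m : ℕ) (hm : ¬ m < 2*j) (hmn : m < 2*j+h+l) :
    Tfun j h l x ⟨m, hmn⟩ = x ⟨m, hmn⟩ := by
  simp only [Tfun]
  rw [dif_neg hm]

lemma Tfun_even (x : Fin (2*j+h+l) → ℝ) (k : ℕ) (hk : 2*k < 2*j) :
    Tfun j h l x ⟨2*k, by omega⟩ = x ⟨2*k, by omega⟩ + x ⟨2*k+1, by omega⟩ := by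
  rw [Tfun_mk_lt j h l x (2*k) hk (by omega), if_pos (by omega),
    xeq x (2*((2*k)/2)) (2*k) (by omega) (by omega) (by omega),
    xeq x (2*((2*k)/2)+1) (2*k+1) (by omega) (by omega) (by omega)]

lemma Tfun_odd (x : Fin (2*j+h+l) → ℝ) (k : ℕ) (hk : 2*k+1 < 2*j) :
    Tfun j h l x ⟨2*k+1, by omega⟩ = x ⟨2*k, by omega⟩ - x ⟨2*k+1, by omega⟩ := by
  rw [Tfun_mk_lt j h l x (2*k+1) hk (by omega), if_neg (by omega),
    xeq x (2*((2*k+1)/2)) (2*k) (by omega) (by omega) (by omega),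
    xeq x (2*((2*k+1)/2)+1) (2*k+1) (by omega) (by omega) (by omega)]
  ring

/-- Tfun as a linear map -/
def Tlin : (Fin (2*j+h+l) → ℝ) →ₗ[ℝ] (Fin (2*j+h+l) → ℝ) where
  toFun := Tfun j h l
  map_add' x y := by
    funext i
    simp only [Tfun, Pi.add_apply]
    split_ifs <;> ring
  map_smul' c x := by
    funext i
    simp only [Tfun, Pi.smul_apply, RingHom.id_apply, smul_eq_mul]
    split_ifs <;> ring

lemma Tlin_injective : Function.Injective (Tlin j h l) := by
  rw [← LinearMap.ker_eq_bot, LinearMap.ker_eq_bot']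
  intro x hx
  have hT : Tfun j h l x = 0 := hx
  funext i
  rcases i with ⟨m, hmn⟩
  by_cases hm : m < 2*j
  · have h0 := congrFun hT ⟨2*(m/2), by omega⟩
    have h1 := congrFun hT ⟨2*(m/2)+1, by omega⟩
    rw [Tfun_even j h l x (m/2) (by omega)] at h0
    rw [Tfun_odd j h l x (m/2) (by omega)] at h1
    simp only [Pi.zero_apply] at h0 h1 ⊢
    rcases Nat.mod_two_eq_zero_or_one m with hp | hp
    · rw [xeq x m (2*(m/2)) hmn (by omega) (by omega)]; linarith
    · rw [xeq x m (2*(m/2)+1) hmn (by omega) (by omega)]; linarith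
  · have h0 := congrFun hT ⟨m, hmn⟩
    rw [Tfun_mk_ge j h l x m hm hmn] at h0
    simpa using h0

lemma row_reduce (y : Fin (2*j+h+l) → ℝ) (i : Fin (2*j+h+l)) :
    (Bmat j h l).mulVec y i =
      if hi : (i:ℕ) < 2*j then y ⟨2*((i:ℕ)/2) + (1 - (i:ℕ)%2), by omega⟩
      else if (i:ℕ) < 2*j+h then - y i else y i := by
  rcases i with ⟨m, hmn⟩
  simp only [Matrix.mulVec, dotProduct, Bmat]
  by_cases hm : m < 2*j
  · rw [dif_pos hm]
    simp only [hm, if_true]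
    rw [Finset.sum_eq_single (⟨2*(m/2) + (1 - m%2), by omega⟩ : Fin (2*j+h+l))]
    · rw [if_pos rfl, one_mul]
    · intro k _ hk
      rw [if_neg, zero_mul]
      intro hc
      exact hk (Fin.ext hc)
    · intro hmem; exact absurd (Finset.mem_univ _) hmem
  · rw [dif_neg hm]
    simp only [hm, if_false]
    by_cases hm2 : m < 2*j+h
    · rw [if_pos hm2]
      simp only [hm2, if_true]
      rw [Finset.sum_eq_single (⟨m, hmn⟩ : Fin (2*j+h+l))]
      · rw [if_pos rfl]; ring
      · intro k _ hk
        rw [if_neg hk, zero_mul]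
      · intro hmem; exact absurd (Finset.mem_univ _) hmem
    · rw [if_neg hm2]
      simp only [hm2, if_false]
      rw [Finset.sum_eq_single (⟨m, hmn⟩ : Fin (2*j+h+l))]
      · rw [if_pos rfl, one_mul]
      · intro k _ hk
        rw [if_neg hk, zero_mul]
      · intro hmem; exact absurd (Finset.mem_univ _) hmem

lemma eigen_identity (x : Fin (2*j+h+l) → ℝ) :
    (Bmat j h l).mulVec (Tfun j h l x) =
      Tfun j h l (fun i => epsf j h l i * x i) := by
  funext i
  rw [row_reduce]
  rcases i with ⟨m, hmn⟩
  by_cases hm : m < 2*j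
  · rw [dif_pos hm]
    rcases Nat.mod_two_eq_zero_or_one m with hp | hp
    · -- m even
      rw [xeq (Tfun j h l x) (2*(m/2) + (1 - m%2)) (2*(m/2)+1) (by omega) (by omega) (by omega)]
      rw [Tfun_odd j h l x (m/2) (by omega)]
      rw [xeq (Tfun j h l fun i => epsf j h l i * x i) m (2*(m/2)) hmn (by omega) (by omega)]
      rw [Tfun_even j h l (fun i => epsf j h l i * x i) (m/2) (by omega)]
      rw [epsf_val, if_neg (by omega), epsf_val, if_pos (by omega)]
      ring
    · -- m odd
      rw [xeq (Tfun j h l x) (2*(m/2) + (1 - m%2)) (2*(m/2)) (by omega) (by omega) (by omega)]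
      rw [Tfun_even j h l x (m/2) (by omega)]
      rw [xeq (Tfun j h l fun i => epsf j h l i * x i) m (2*(m/2)+1) hmn (by omega) (by omega)]
      rw [Tfun_odd j h l (fun i => epsf j h l i * x i) (m/2) (by omega)]
      rw [epsf_val, if_neg (by omega), epsf_val, if_pos (by omega)]
      ring
  · rw [dif_neg hm]
    rw [Tfun_mk_ge j h l (fun i => epsf j h l i * x i) m hm hmn]
    dsimp only
    rw [epsf_val]
    by_cases hm2 : m < 2*j+h
    · rw [if_pos hm2, if_pos (by omega), Tfun_mk_ge j h l x m hm hmn]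
      ring
    · rw [if_neg hm2, if_neg (by omega), Tfun_mk_ge j h l x m hm hmn]
      ring

/-- the eigenbasis -/
noncomputable def eigenBasis : Basis (Fin (2*j+h+l)) ℝ (Fin (2*j+h+l) → ℝ) :=
  (Pi.basisFun ℝ (Fin (2*j+h+l))).map
    (LinearEquiv.ofBijective (Tlin j h l)
      ⟨Tlin_injective j h l, (LinearMap.injective_iff_surjective).mp (Tlin_injective j h l)⟩)

lemma eigenBasis_eigen (i : Fin (2*j+h+l)) :
    Matrix.toLin' (Bmat j h l) (eigenBasis j h l i) = epsf j h l i • eigenBasis j h l i := by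
  have hb : eigenBasis j h l i = Tfun j h l (Pi.basisFun ℝ (Fin (2*j+h+l)) i) := by
    rw [eigenBasis, Basis.map_apply]
    rfl
  rw [hb, Matrix.toLin'_apply, eigen_identity]
  have hD : (fun k => epsf j h l k * (Pi.basisFun ℝ (Fin (2*j+h+l)) i) k)
      = epsf j h l i • (Pi.basisFun ℝ (Fin (2*j+h+l)) i) := by
    funext k
    simp only [Pi.basisFun_apply, Pi.smul_apply, smul_eq_mul]
    by_cases hk : k = i
    · subst hk; rfl
    · rw [Pi.single_apply, if_neg hk]
      simp [Pi.single_apply, hk]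
  rw [hD]
  have := (Tlin j h l).map_smul (epsf j h l i) (Pi.basisFun ℝ (Fin (2*j+h+l)) i)
  exact this


lemma count_fixed_inter {α : Type*} [DecidableEq α] [Fintype α] (N : Finset α) (p k : ℕ)
    (hk : k ≤ p) :
    ((Finset.powersetCard p (univ : Finset α)).filter fun s => (s ∩ N).card = k).card
      = N.card.choose k * (univ \ N).card.choose (p - k) := by
  rw [← Finset.card_powersetCard k N, ← Finset.card_powersetCard (p-k) (univ \ N),
    ← Finset.card_product]
  have hrec : ∀ s : Finset α, s ∩ N ∪ s \ N = s := by
    intro s; ext x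
    simp only [Finset.mem_union, Finset.mem_inter, Finset.mem_sdiff]
    tauto
  apply Finset.card_bij (fun s _ => (s ∩ N, s \ N))
  · intro s hs
    obtain ⟨hs1, hs2⟩ := Finset.mem_filter.mp hs
    obtain ⟨hsub, hcard⟩ := Finset.mem_powersetCard.mp hs1
    rw [Finset.mem_product]
    dsimp only
    constructor
    · exact Finset.mem_powersetCard.mpr ⟨Finset.inter_subset_right, hs2⟩
    · refine Finset.mem_powersetCard.mpr ⟨?_, ?_⟩
      · intro x hx
        rw [Finset.mem_sdiff] at hx ⊢
        exact ⟨Finset.mem_univ x, hx.2⟩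
      · have := Finset.card_inter_add_card_sdiff s N
        omega
  · intro a ha b hb hab
    rw [Prod.ext_iff] at hab
    dsimp only at hab
    rw [← hrec a, ← hrec b, hab.1, hab.2]
  · rintro ⟨a, b⟩ hab
    rw [Finset.mem_product] at hab
    obtain ⟨h1, h2⟩ := hab
    obtain ⟨haN, hak⟩ := Finset.mem_powersetCard.mp h1
    obtain ⟨hbN, hbk⟩ := Finset.mem_powersetCard.mp h2
    have hbnotN : ∀ x ∈ b, x ∉ N := fun x hx => (Finset.mem_sdiff.mp (hbN hx)).2
    have hdisj : Disjoint a b := by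
      rw [Finset.disjoint_left]
      intro x hxa hxb
      exact hbnotN x hxb (haN hxa)
    have hinter : (a ∪ b) ∩ N = a := by
      ext x
      simp only [Finset.mem_inter, Finset.mem_union]
      constructor
      · rintro ⟨hx1 | hx1, hx2⟩
        · exact hx1
        · exact absurd hx2 (hbnotN x hx1)
      · intro hx; exact ⟨Or.inl hx, haN hx⟩
    have hsdiff : (a ∪ b) \ N = b := by
      ext x
      simp only [Finset.mem_sdiff, Finset.mem_union]
      constructor
      · rintro ⟨hx1 | hx1, hx2⟩
        · exact absurd (haN hx1) hx2
        · exact hx1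
      · intro hx; exact ⟨Or.inr hx, hbnotN x hx⟩
    refine ⟨a ∪ b, ?_, ?_⟩
    · rw [Finset.mem_filter]
      constructor
      · refine Finset.mem_powersetCard.mpr ⟨Finset.subset_univ _, ?_⟩
        rw [Finset.card_union_of_disjoint hdisj, hak, hbk]
        omega
      · rw [hinter, hak]
    · rw [hinter, hsdiff]

/-- the negative eigenvalue set -/
def Nset : Finset (Fin (2*j+h+l)) :=
  univ.filter fun i => ((i:ℕ) < 2*j ∧ (i:ℕ) % 2 = 1) ∨ (2*j ≤ (i:ℕ) ∧ (i:ℕ) < 2*j+h)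

lemma card_Nset : (Nset j h l).card = j + h := by
  have : (Nset j h l).card = (univ : Finset (Fin (j+h))).card := by
    apply Finset.card_bij
      (fun (a : Fin (2*j+h+l)) (ha : a ∈ Nset j h l) =>
        (⟨if (a:ℕ) < 2*j then (a:ℕ)/2 else j + ((a:ℕ) - 2*j), by
          have := (Finset.mem_filter.mp ha).2
          split_ifs <;> omega⟩ : Fin (j+h)))
    · intro a ha; exact Finset.mem_univ _
    · intro a1 ha1 a2 ha2 heq
      have h1 := (Finset.mem_filter.mp ha1).2
      have h2 := (Finset.mem_filter.mp ha2).2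
      rw [Fin.mk.injEq] at heq
      apply Fin.ext
      split_ifs at heq <;> omega
    · intro b _
      by_cases hb : (b:ℕ) < j
      · refine ⟨⟨2*(b:ℕ)+1, by omega⟩, ?_, ?_⟩
        · rw [Nset, Finset.mem_filter]
          simp only [Fin.val_mk]
          exact ⟨Finset.mem_univ _, Or.inl ⟨by omega, by omega⟩⟩
        · apply Fin.ext
          simp only [Fin.val_mk]
          rw [if_pos (by omega : 2*(b:ℕ)+1 < 2*j)]
          omega
      · refine ⟨⟨2*j + ((b:ℕ) - j), by omega⟩, ?_, ?_⟩
        · rw [Nset, Finset.mem_filter]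
          simp only [Fin.val_mk]
          exact ⟨Finset.mem_univ _, Or.inr ⟨by omega, by omega⟩⟩
        · apply Fin.ext
          simp only [Fin.val_mk]
          rw [if_neg (by omega : ¬ 2*j + ((b:ℕ) - j) < 2*j)]
          omega
  rw [this, Finset.card_univ, Fintype.card_fin]

lemma card_Nset_compl : ((univ : Finset (Fin (2*j+h+l))) \ Nset j h l).card = j + l := by
  rw [Finset.card_sdiff_of_subset (Finset.subset_univ _), Finset.card_univ, Fintype.card_fin,
    card_Nset]
  omega

lemma prod_epsf (s : Finset (Fin (2*j+h+l))) :
    ∏ i ∈ s, epsf j h l i = (-1 : ℝ) ^ ((s ∩ Nset j h l).card) := by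
  classical
  set P : Fin (2*j+h+l) → Prop :=
    fun i => (i.val < 2*j ∧ i.val % 2 = 1) ∨ (2*j ≤ i.val ∧ i.val < 2*j+h) with hP
  have hfilter : s.filter P = s ∩ Nset j h l := by
    ext x
    simp only [Finset.mem_filter, Finset.mem_inter, Nset, Finset.mem_univ, true_and, hP]
  rw [← Finset.prod_filter_mul_prod_filter_not s P]
  have h1 : ∏ i ∈ s.filter P, epsf j h l i = (-1 : ℝ) ^ ((s ∩ Nset j h l).card) := by
    rw [← hfilter]
    rw [Finset.prod_congr rfl (fun i hi => ?_), Finset.prod_const]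
    rcases i with ⟨m, hmn⟩
    rw [epsf_val, if_pos (Finset.mem_filter.mp hi).2]
  have h2 : ∏ i ∈ s.filter (fun i => ¬ P i), epsf j h l i = 1 := by
    rw [Finset.prod_congr rfl (fun i hi => ?_), Finset.prod_const_one]
    rcases i with ⟨m, hmn⟩
    rw [epsf_val, if_neg (Finset.mem_filter.mp hi).2]
  rw [h1, h2, mul_one]

lemma final_count (p : ℕ) :
    (Finset.univ.filter fun s : {s : Finset (Fin (2*j+h+l)) // s.card = p} =>
        (∏ i ∈ s.1, epsf j h l i) = 1).card =
      ∑ i ∈ Finset.range (p / 2 + 1), (j + h).choose (2 * i) * (j + l).choose (p - 2 * i) := by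
  classical
  -- transfer to finsets
  have step1 : (Finset.univ.filter fun s : {s : Finset (Fin (2*j+h+l)) // s.card = p} =>
      (∏ i ∈ s.1, epsf j h l i) = 1).card =
      ((Finset.powersetCard p (univ : Finset (Fin (2*j+h+l)))).filter
        fun s => Even ((s ∩ Nset j h l).card)).card := by
    apply Finset.card_bij (fun s _ => s.1)
    · intro s hs
      rw [Finset.mem_filter]
      refine ⟨Finset.mem_powersetCard_univ.mpr s.2, ?_⟩
      have := (Finset.mem_filter.mp hs).2
      rw [prod_epsf] at this
      exact (neg_one_pow_eq_one_iff_even (by norm_num : (-1:ℝ) ≠ 1)).mp this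
    · intro a _ b _ hab
      exact Subtype.ext hab
    · intro t ht
      obtain ⟨ht1, ht2⟩ := Finset.mem_filter.mp ht
      refine ⟨⟨t, Finset.mem_powersetCard_univ.mp ht1⟩, ?_, rfl⟩
      rw [Finset.mem_filter]
      refine ⟨Finset.mem_univ _, ?_⟩
      rw [prod_epsf]
      exact (neg_one_pow_eq_one_iff_even (by norm_num : (-1:ℝ) ≠ 1)).mpr ht2
  rw [step1]
  -- fiberwise decomposition
  have step2 : ((Finset.powersetCard p (univ : Finset (Fin (2*j+h+l)))).filter
      fun s => Even ((s ∩ Nset j h l).card)).card =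
      ∑ i ∈ Finset.range (p / 2 + 1),
        ((Finset.powersetCard p (univ : Finset (Fin (2*j+h+l)))).filter
          fun s => (s ∩ Nset j h l).card = 2 * i).card := by
    rw [Finset.card_eq_sum_card_fiberwise
      (f := fun s => (s ∩ Nset j h l).card / 2) (t := Finset.range (p / 2 + 1)) ?_]
    · refine Finset.sum_congr rfl fun i _ => ?_
      congr 1
      rw [Finset.filter_filter]
      apply Finset.filter_congr
      intro s hs
      have hcard : s.card = p := (Finset.mem_powersetCard.mp hs).2
      have hle : (s ∩ Nset j h l).card ≤ p := by
        rw [← hcard]; exact Finset.card_le_card Finset.inter_subset_left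
      constructor
      · rintro ⟨he, hdiv⟩
        obtain ⟨c, hc⟩ := he
        omega
      · intro hc
        exact ⟨⟨i, by omega⟩, by omega⟩
    · intro s hs
      rw [Finset.mem_coe, Finset.mem_filter] at hs
      have hcard : s.card = p := (Finset.mem_powersetCard.mp hs.1).2
      have hle : (s ∩ Nset j h l).card ≤ p := by
        rw [← hcard]; exact Finset.card_le_card Finset.inter_subset_left
      dsimp only
      rw [Finset.mem_coe, Finset.mem_range]
      omega
  rw [step2]
  refine Finset.sum_congr rfl fun i hi => ?_
  have hip : 2 * i ≤ p := by
    have := Finset.mem_range.mp hi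
    omega
  rw [count_fixed_inter (Nset j h l) p (2*i) hip, card_Nset, card_Nset_compl]


end ExtAux

/-- For `1 ≤ p ≤ n`, the dimension of the subspace of `⋀^p(ℝ^n)` fixed pointwise by
`⋀^p B_{j,h}` equals `∑_{i=0}^{⌊p/2⌋} C(j+h, 2i) C(j+l, p-2i)`. -/
theorem finrank_fixed_exteriorPower_Bmat (j h l : ℕ) (hl : 1 ≤ l) (hjh : j + h ≠ 0)
    (p : ℕ) (hp1 : 1 ≤ p) (hp2 : p ≤ 2 * j + h + l) :
    Module.finrank ℝ
      (LinearMap.ker (exteriorPowerMap p (Matrix.toLin' (Bmat j h l)) - LinearMap.id)) =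
      ∑ i ∈ Finset.range (p / 2 + 1), (j + h).choose (2 * i) * (j + l).choose (p - 2 * i) := by
  have h1 := ExtAux.finrank_fixed_general p (ExtAux.eigenBasis j h l)
    (Matrix.toLin' (Bmat j h l)) (ExtAux.epsf j h l) (ExtAux.eigenBasis_eigen j h l)
  rw [h1, ExtAux.final_count]
end
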